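/- arXiv:2211.06624 — 8 statements merged into one kernel-verified Lean document; each statement's English description precedes it below -/
import Mathlib

section
/- Let A be an n×n real symmetric positive definite matrix, let s ∈ ℝ^n with s ≠ 0, let y = As, and let τ ≥ 0. Then ⟨s,(I+τA²)s⟩ > 0 and the RBB stepsize α^RBB(τ) = ⟨s,(I+τA²)y⟩/⟨s,(I+τA²)s⟩ satisfies λ_min(A) ≤ α^RBB(τ) ≤ λ_max(A). -/
/-!
Diagonalize `A = U diag(λ) Uᵀ` and put `c = Uᵀ s`. Then `(I + τA²)` and `(I + τA²)A` are
polynomials in `A`, so both quadratic forms in the RBB stepsize become sums over the eigenvalues: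
`⟨s, (I + τA²)s⟩ = ∑ wᵢ` and `⟨s, (I + τA²)As⟩ = ∑ wᵢ λᵢ` with weights `wᵢ = cᵢ² (1 + τλᵢ²) ≥ 0`,
not all zero since `s ≠ 0`. The stepsize is therefore a weighted mean of the eigenvalues.
-/

open Matrix Polynomial

variable {ι : Type*} [Fintype ι]

theorem ciInf_le_sum_mul_div_sum (f w : ι → ℝ) (hw : ∀ i, 0 ≤ w i) (hw₀ : 0 < ∑ i, w i) :
    ⨅ i, f i ≤ (∑ i, w i * f i) / ∑ i, w i := by
  rw [le_div_iff₀ hw₀, Finset.mul_sum]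
  refine Finset.sum_le_sum fun i _ => ?_
  rw [mul_comm]
  exact mul_le_mul_of_nonneg_left (ciInf_le (Set.finite_range f).bddBelow i) (hw i)

theorem sum_mul_div_sum_le_ciSup (f w : ι → ℝ) (hw : ∀ i, 0 ≤ w i) (hw₀ : 0 < ∑ i, w i) :
    (∑ i, w i * f i) / ∑ i, w i ≤ ⨆ i, f i := by
  rw [div_le_iff₀ hw₀, Finset.mul_sum]
  refine Finset.sum_le_sum fun i _ => ?_
  rw [mul_comm]
  exact mul_le_mul_of_nonneg_right (le_ciSup (Set.finite_range f).bddAbove i) (hw i)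

namespace Matrix

theorem dotProduct_mul_mul_transpose_mulVec (U M : Matrix ι ι ℝ) (s : ι → ℝ) :
    s ⬝ᵥ (U * M * Uᵀ) *ᵥ s = (Uᵀ *ᵥ s) ⬝ᵥ M *ᵥ (Uᵀ *ᵥ s) := by
  rw [← mulVec_mulVec, ← mulVec_mulVec, dotProduct_mulVec, mulVec_transpose]

variable [DecidableEq ι]

theorem dotProduct_diagonal_mulVec_self (d c : ι → ℝ) :
    c ⬝ᵥ diagonal d *ᵥ c = ∑ i, c i ^ 2 * d i := by
  simp only [dotProduct, mulVec_diagonal]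
  exact Finset.sum_congr rfl fun i _ => by ring

theorem aeval_diagonal {R : Type*} [CommSemiring R] (d : ι → R) (p : R[X]) :
    aeval (diagonal d) p = diagonal fun i => p.eval (d i) := by
  rw [← diagonalAlgHom_apply (R := R), aeval_algHom_apply, aeval_pi_apply]
  simp

namespace IsHermitian

variable {A : Matrix ι ι ℝ} (hA : A.IsHermitian)

theorem aeval_eq (p : ℝ[X]) :
    aeval A p = hA.eigenvectorUnitary * diagonal (fun i => p.eval (hA.eigenvalues i)) *
      (hA.eigenvectorUnitary : Matrix ι ι ℝ)ᵀ := by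
  conv_lhs => rw [hA.spectral_theorem]
  rw [aeval_algHom_apply]
  simp [aeval_diagonal, star_eq_conjTranspose]

theorem dotProduct_aeval_mulVec (p : ℝ[X]) (s : ι → ℝ) :
    s ⬝ᵥ aeval A p *ᵥ s =
      ∑ i, ((hA.eigenvectorUnitary : Matrix ι ι ℝ)ᵀ *ᵥ s) i ^ 2 * p.eval (hA.eigenvalues i) := by
  rw [hA.aeval_eq, dotProduct_mul_mul_transpose_mulVec, dotProduct_diagonal_mulVec_self]

theorem transpose_eigenvectorUnitary_mulVec_ne_zero {s : ι → ℝ} (hs : s ≠ 0) :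
    (hA.eigenvectorUnitary : Matrix ι ι ℝ)ᵀ *ᵥ s ≠ 0 := by
  have hU : IsUnit (hA.eigenvectorUnitary : Matrix ι ι ℝ)ᵀ :=
    (isUnit_transpose _).mpr Unitary.isUnit_coe
  simpa using (mulVec_injective_iff_isUnit.mpr hU).ne hs

end IsHermitian

end Matrix

theorem rbb_stepsize_in_spectrum_general
    (n : ℕ)
    (A : Matrix (Fin n) (Fin n) ℝ) (hA : A.PosDef)
    (s : Fin n → ℝ) (hs : s ≠ 0) (y : Fin n → ℝ) (hy : y = A.mulVec s)
    (τ : ℝ) (hτ : 0 ≤ τ) :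
    0 < s ⬝ᵥ (1 + τ • (A * A)).mulVec s ∧
      (⨅ i, hA.isHermitian.eigenvalues i) ≤
        s ⬝ᵥ (1 + τ • (A * A)).mulVec y / (s ⬝ᵥ (1 + τ • (A * A)).mulVec s) ∧
      s ⬝ᵥ (1 + τ • (A * A)).mulVec y / (s ⬝ᵥ (1 + τ • (A * A)).mulVec s) ≤
        ⨆ i, hA.isHermitian.eigenvalues i := by
  set hH := hA.isHermitian
  set c := (hH.eigenvectorUnitary : Matrix (Fin n) (Fin n) ℝ)ᵀ *ᵥ s
  set q : ℝ[X] := 1 + C τ * X ^ 2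
  have hq : ∀ x, 0 < q.eval x := fun x => by
    simp only [q, eval_add, eval_one, eval_mul, eval_C, eval_pow, eval_X]
    positivity
  set w := fun i => c i ^ 2 * q.eval (hH.eigenvalues i)
  have hw : ∀ i, 0 ≤ w i := fun i => mul_nonneg (sq_nonneg _) (hq _).le
  have hw₀ : 0 < ∑ i, w i := by
    obtain ⟨j, hj⟩ := Function.ne_iff.mp (hH.transpose_eigenvectorUnitary_mulVec_ne_zero hs)
    exact Finset.sum_pos' (fun i _ => hw i)
      ⟨j, Finset.mem_univ _, mul_pos (sq_pos_of_ne_zero hj) (hq _)⟩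
  have hden : s ⬝ᵥ (1 + τ • (A * A)) *ᵥ s = ∑ i, w i := by
    rw [← hH.dotProduct_aeval_mulVec]
    simp [q, sq, Algebra.smul_def]
  have hnum : s ⬝ᵥ (1 + τ • (A * A)) *ᵥ y = ∑ i, w i * hH.eigenvalues i := by
    have hqX : (1 + τ • (A * A)) * A = aeval A (q * X) := by
      simp [q, sq, Algebra.smul_def, add_mul, mul_assoc]
    rw [hy, mulVec_mulVec, hqX, hH.dotProduct_aeval_mulVec]
    simp only [w, c, eval_mul, eval_X, mul_assoc]
  rw [hden, hnum]
  exact ⟨hw₀, ciInf_le_sum_mul_div_sum _ w hw hw₀, sum_mul_div_sum_le_ciSup _ w hw hw₀⟩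

/-- For a symmetric positive definite `A`, `s ≠ 0`, `y = As` and `τ ≥ 0`,
the denominator `⟨s,(I+τA²)s⟩` is positive and the RBB stepsize
`α^RBB(τ) = ⟨s,(I+τA²)y⟩/⟨s,(I+τA²)s⟩` lies between the smallest and largest
eigenvalues of `A`. -/
theorem rbb_stepsize_in_spectrum
    (n : ℕ) (hn : 0 < n)
    (A : Matrix (Fin n) (Fin n) ℝ) (hA : A.PosDef)
    (s : Fin n → ℝ) (hs : s ≠ 0) (y : Fin n → ℝ) (hy : y = A.mulVec s)
    (τ : ℝ) (hτ : 0 ≤ τ) :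
    0 < s ⬝ᵥ (1 + τ • (A * A)).mulVec s ∧
      (⨅ i, hA.isHermitian.eigenvalues i) ≤
        s ⬝ᵥ (1 + τ • (A * A)).mulVec y / (s ⬝ᵥ (1 + τ • (A * A)).mulVec s) ∧
      s ⬝ᵥ (1 + τ • (A * A)).mulVec y / (s ⬝ᵥ (1 + τ • (A * A)).mulVec s) ≤
        ⨆ i, hA.isHermitian.eigenvalues i :=
  rbb_stepsize_in_spectrum_general n A hA s hs y hy τ hτ
end

section
/- Let A be an n×n real symmetric positive semidefinite matrix and let s ∈ ℝ^n. Then ⟨s, As⟩·⟨s, A²s⟩ ≤ ⟨s, s⟩·⟨s, A³s⟩. -/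
open Matrix

lemma dot_cs (n : ℕ) (u v : Fin n → ℝ) :
    (u ⬝ᵥ v) ^ 2 ≤ (u ⬝ᵥ u) * (v ⬝ᵥ v) := by
  simpa [dotProduct, sq] using
    Finset.sum_mul_sq_le_sq_mul_sq Finset.univ u v

/-- For a real symmetric positive semidefinite `A` and any `s ∈ ℝⁿ`,
`⟨s,As⟩·⟨s,A²s⟩ ≤ ⟨s,s⟩·⟨s,A³s⟩`. -/
theorem posSemidef_cauchy_schwarz_moment_ineq
    (n : ℕ) (A : Matrix (Fin n) (Fin n) ℝ) (hA : A.PosSemidef)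
    (s : Fin n → ℝ) :
    (s ⬝ᵥ A.mulVec s) * (s ⬝ᵥ (A * A).mulVec s) ≤
      (s ⬝ᵥ s) * (s ⬝ᵥ (A * A * A).mulVec s) := by
  set B := (open scoped MatrixOrder in CFC.sqrt A) with hB
  have hBB : B * B = A := by open scoped MatrixOrder in exact CFC.sqrt_mul_sqrt_self A hA.nonneg
  have hBh : Bᵀ = B := by
    have := (open scoped MatrixOrder in (CFC.sqrt_nonneg A).posSemidef.1)
    simpa [Matrix.IsHermitian] using this
  have hAt : Aᵀ = A := by
    have := hA.1
    simpa [Matrix.IsHermitian] using this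
  set a := s ⬝ᵥ s with ha
  set b := s ⬝ᵥ A.mulVec s with hb'
  set c := s ⬝ᵥ (A * A).mulVec s with hc'
  set d := s ⬝ᵥ (A * A * A).mulVec s with hd'
  have key : ∀ x : Fin n → ℝ, x ⬝ᵥ A.mulVec x = (B.mulVec x) ⬝ᵥ (B.mulVec x) := by
    intro x
    rw [← hBB, ← Matrix.mulVec_mulVec, Matrix.dotProduct_mulVec, ← Matrix.mulVec_transpose, hBh]
  have hc2 : c = (A.mulVec s) ⬝ᵥ (A.mulVec s) := by
    rw [hc', ← Matrix.mulVec_mulVec, Matrix.dotProduct_mulVec,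
      ← Matrix.mulVec_transpose, hAt]
  have hd2 : d = (A.mulVec s) ⬝ᵥ A.mulVec (A.mulVec s) := by
    rw [hd', ← Matrix.mulVec_mulVec, ← Matrix.mulVec_mulVec,
      Matrix.dotProduct_mulVec, ← Matrix.mulVec_transpose, hAt]
  have hc3 : c = (B.mulVec s) ⬝ᵥ (B.mulVec (A.mulVec s)) := by
    rw [hc2, Matrix.dotProduct_mulVec (B.mulVec s), ← Matrix.mulVec_transpose, hBh,
      Matrix.mulVec_mulVec, hBB]
  have hbb : b = (B.mulVec s) ⬝ᵥ (B.mulVec s) := by rw [hb', key]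
  have hdd : d = (B.mulVec (A.mulVec s)) ⬝ᵥ (B.mulVec (A.mulVec s)) := by
    rw [hd2, key]
  have cs1 : b ^ 2 ≤ a * c := by
    rw [hb', hc2, ha]; exact dot_cs n s (A.mulVec s)
  have cs2 : c ^ 2 ≤ b * d := by
    rw [hc3, hbb, hdd]; exact dot_cs n (B.mulVec s) (B.mulVec (A.mulVec s))
  have ha0 : 0 ≤ a := by rw [ha]; exact Finset.sum_nonneg fun i _ => mul_self_nonneg _
  have hb0 : 0 ≤ b := by simpa using hA.dotProduct_mulVec_nonneg s
  have hc0 : 0 ≤ c := by rw [hc2]; exact Finset.sum_nonneg fun i _ => mul_self_nonneg _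
  have hd0 : 0 ≤ d := by rw [hd2]; simpa using hA.dotProduct_mulVec_nonneg (A.mulVec s)
  rcases eq_or_lt_of_le (mul_nonneg hb0 hc0) with h | h
  · calc b * c = 0 := h.symm
      _ ≤ a * d := mul_nonneg ha0 hd0
  · have key2 : (b * c) ^ 2 ≤ (a * d) * (b * c) := by nlinarith
    exact le_of_mul_le_mul_right (by nlinarith) h
end

section
/- Let A be an n×n real symmetric positive definite matrix, let s ∈ ℝ^n with s ≠ 0, and let y = As (so ⟨s,y⟩ > 0). Define α(τ) = ⟨s,(I+τA²)y⟩/⟨s,(I+τA²)s⟩ for τ ≥ 0. Then α is monotone nondecreasing on [0,∞), α(0) = α^BB1 = ⟨s,y⟩/⟨s,s⟩, and α^BB1 ≤ α(τ) ≤ λ_max(A) for every τ ≥ 0. -/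
open Matrix

lemma symm_dot {n : ℕ} {A : Matrix (Fin n) (Fin n) ℝ} (hA : A.IsHermitian)
    (x z : Fin n → ℝ) : x ⬝ᵥ A.mulVec z = (A.mulVec x) ⬝ᵥ z := by
  rw [Matrix.dotProduct_mulVec, ← Matrix.mulVec_transpose,
    ← Matrix.conjTranspose_eq_transpose_of_trivial, hA]

lemma rayleigh_upper {n : ℕ} {A : Matrix (Fin n) (Fin n) ℝ}
    (hA : A.IsHermitian) [Nonempty (Fin n)] (v : Fin n → ℝ) :
    v ⬝ᵥ A.mulVec v ≤ (⨆ i, hA.eigenvalues i) * (v ⬝ᵥ v) := by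
  set U : Matrix (Fin n) (Fin n) ℝ := (hA.eigenvectorUnitary : Matrix (Fin n) (Fin n) ℝ)
    with hU
  have spectral : A = U * Matrix.diagonal (RCLike.ofReal ∘ hA.eigenvalues) * star U := by
    rw [hU]; exact hA.spectral_theorem
  set w : Fin n → ℝ := (star U).mulVec v with hw
  have hU1 : U * star U = 1 := Matrix.mem_unitaryGroup_iff.mp hA.eigenvectorUnitary.2
  have key : ∀ x : Fin n → ℝ, v ⬝ᵥ U.mulVec x = w ⬝ᵥ x := by
    intro x
    rw [Matrix.dotProduct_mulVec, hw, ← Matrix.mulVec_transpose,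
      ← Matrix.conjTranspose_eq_transpose_of_trivial]
    rfl
  have hvv : v ⬝ᵥ v = w ⬝ᵥ w := by
    rw [← key w, hw, Matrix.mulVec_mulVec, hU1, Matrix.one_mulVec]
  have hAv : v ⬝ᵥ A.mulVec v = ∑ i, hA.eigenvalues i * (w i * w i) := by
    conv_lhs => rw [spectral]
    simp only [← Matrix.mulVec_mulVec]
    rw [key, ← hw]
    simp only [Matrix.mulVec_diagonal, dotProduct, Function.comp, RCLike.ofReal_real_eq_id, id]
    exact Finset.sum_congr rfl fun i _ => by ring
  have hbdd : BddAbove (Set.range hA.eigenvalues) := (Set.finite_range _).bddAbove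
  rw [hAv, hvv, dotProduct, Finset.mul_sum]
  refine Finset.sum_le_sum fun i _ => ?_
  exact mul_le_mul_of_nonneg_right (le_ciSup hbdd i) (mul_self_nonneg _)

/-- For a symmetric positive definite `A`, `s ≠ 0`, `y = As`,
the RBB stepsize `α(τ) = ⟨s,(I+τA²)y⟩/⟨s,(I+τA²)s⟩` is monotone nondecreasing
on `[0,∞)`, equals `α^BB1 = ⟨s,y⟩/⟨s,s⟩` at `τ = 0`, and satisfies
`α^BB1 ≤ α(τ) ≤ λ_max(A)` for all `τ ≥ 0`. -/
theorem rbb_stepsize_monotone_in_tau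
    (n : ℕ) (hn : 0 < n)
    (A : Matrix (Fin n) (Fin n) ℝ) (hA : A.PosDef)
    (s : Fin n → ℝ) (hs : s ≠ 0) (y : Fin n → ℝ) (hy : y = A.mulVec s)
    (α : ℝ → ℝ)
    (hα : ∀ τ : ℝ,
      α τ = s ⬝ᵥ (1 + τ • (A * A)).mulVec y / (s ⬝ᵥ (1 + τ • (A * A)).mulVec s)) :
    (∀ τ₁ τ₂ : ℝ, 0 ≤ τ₁ → τ₁ ≤ τ₂ → α τ₁ ≤ α τ₂) ∧
    α 0 = (s ⬝ᵥ y) / (s ⬝ᵥ s) ∧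
    (∀ τ : ℝ, 0 ≤ τ →
      (s ⬝ᵥ y) / (s ⬝ᵥ s) ≤ α τ ∧ α τ ≤ ⨆ i, hA.isHermitian.eigenvalues i) := by
  haveI : Nonempty (Fin n) := ⟨⟨0, hn⟩⟩
  set u : Fin n → ℝ := A.mulVec s with hu
  set m0 : ℝ := s ⬝ᵥ s with hm0def
  set m1 : ℝ := s ⬝ᵥ u with hm1def
  set m2 : ℝ := u ⬝ᵥ u with hm2def
  set m3 : ℝ := u ⬝ᵥ A.mulVec u with hm3def
  have hm1 : 0 < m1 := by
    have := hA.dotProduct_mulVec_pos hs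
    rwa [star_trivial, ← hu, ← hm1def] at this
  have hu0 : u ≠ 0 := by
    intro h
    rw [hm1def, h, dotProduct_zero] at hm1
    exact lt_irrefl 0 hm1
  have hm0 : 0 < m0 := by
    have h := (dotProduct_self_star_pos_iff (v := s)).2 hs
    rwa [star_trivial] at h
  have hm2 : 0 < m2 := by
    have h := (dotProduct_self_star_pos_iff (v := u)).2 hu0
    rwa [star_trivial] at h
  have hm3 : 0 < m3 := by
    have := hA.dotProduct_mulVec_pos hu0
    rwa [star_trivial, ← hm3def] at this
  -- symmetric dot product facts
  have hsAu : s ⬝ᵥ A.mulVec u = m2 := by rw [symm_dot hA.1, ← hu, ← hm2def]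
  -- the simplified formula for α
  have hα' : ∀ τ : ℝ, α τ = (m1 + τ * m3) / (m0 + τ * m2) := by
    intro τ
    have hsAAu : s ⬝ᵥ (A * A).mulVec u = m3 := by
      rw [← Matrix.mulVec_mulVec, symm_dot hA.1, ← hu, ← hm3def]
    have hsAAs : s ⬝ᵥ (A * A).mulVec s = m2 := by
      rw [← Matrix.mulVec_mulVec, symm_dot hA.1, ← hu, ← hm2def]
    have hnum : s ⬝ᵥ (1 + τ • (A * A)).mulVec y = m1 + τ * m3 := by
      rw [hy, Matrix.add_mulVec, Matrix.one_mulVec, Matrix.smul_mulVec,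
        dotProduct_add, dotProduct_smul, smul_eq_mul, hsAAu, ← hm1def]
    have hden : s ⬝ᵥ (1 + τ • (A * A)).mulVec s = m0 + τ * m2 := by
      rw [Matrix.add_mulVec, Matrix.one_mulVec, Matrix.smul_mulVec,
        dotProduct_add, dotProduct_smul, smul_eq_mul, hsAAs, ← hm0def]
    rw [hα τ, hnum, hden]
  have hD : ∀ τ : ℝ, 0 ≤ τ → 0 < m0 + τ * m2 := fun τ hτ =>
    add_pos_of_pos_of_nonneg hm0 (mul_nonneg hτ hm2.le)
  -- Cauchy-Schwarz 1 : m1^2 ≤ m0 * m2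
  have CS1 : m1 ^ 2 ≤ m0 * m2 := by
    have h := Finset.sum_mul_sq_le_sq_mul_sq Finset.univ s u
    simpa only [hm0def, hm1def, hm2def, dotProduct, pow_two] using h
  -- Cauchy-Schwarz 2 (in the A-inner product) : m2^2 ≤ m1 * m3
  have CS2 : m2 ^ 2 ≤ m1 * m3 := by
    have hquad : ∀ t : ℝ, 0 ≤ m3 * (t * t) + (2 * m2) * t + m1 := by
      intro t
      have hps : 0 ≤ (s + t • u) ⬝ᵥ A.mulVec (s + t • u) := by
        have h := hA.posSemidef.dotProduct_mulVec_nonneg (s + t • u)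
        rwa [star_trivial] at h
      have hexp : (s + t • u) ⬝ᵥ A.mulVec (s + t • u)
          = m3 * (t * t) + (2 * m2) * t + m1 := by
        rw [Matrix.mulVec_add, Matrix.mulVec_smul]
        simp only [dotProduct_add, add_dotProduct, dotProduct_smul, smul_dotProduct,
          smul_eq_mul]
        rw [hsAu, ← hu, ← hm1def, ← hm2def, ← hm3def]
        ring
      rwa [hexp] at hps
    have hd := discrim_le_zero hquad
    rw [discrim] at hd
    nlinarith [hd]
  have cheb : m1 * m2 ≤ m0 * m3 := by
    nlinarith [CS1, CS2, mul_pos hm1 hm2, sq_nonneg (m1 * m2)]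
  have mono : ∀ τ₁ τ₂ : ℝ, 0 ≤ τ₁ → τ₁ ≤ τ₂ → α τ₁ ≤ α τ₂ := by
    intro τ₁ τ₂ h1 h12
    rw [hα' τ₁, hα' τ₂, div_le_div_iff₀ (hD τ₁ h1) (hD τ₂ (h1.trans h12))]
    nlinarith [mul_nonneg (sub_nonneg.2 h12) (sub_nonneg.2 cheb)]
  have hα0 : α 0 = (s ⬝ᵥ y) / (s ⬝ᵥ s) := by
    rw [hα' 0, hy, ← hm1def, ← hm0def, zero_mul, zero_mul, add_zero, add_zero]
  refine ⟨mono, hα0, fun τ hτ => ⟨?_, ?_⟩⟩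
  · rw [← hα0]; exact mono 0 τ le_rfl hτ
  · rw [hα' τ, div_le_iff₀ (hD τ hτ)]
    have h1 : m1 ≤ (⨆ i, hA.isHermitian.eigenvalues i) * m0 := by
      have h := rayleigh_upper hA.isHermitian s
      rwa [← hu, ← hm1def, ← hm0def] at h
    have h3 : m3 ≤ (⨆ i, hA.isHermitian.eigenvalues i) * m2 := by
      have h := rayleigh_upper hA.isHermitian u
      rwa [← hm3def, ← hm2def] at h
    nlinarith [mul_le_mul_of_nonneg_left h3 hτ]
end

section
/- Let A be an n×n real symmetric positive definite matrix, let s ∈ ℝ^n with s ≠ 0 and suppose s is not an eigenvector of A; set y = As. Let γ ∈ [0,1] and let α^Dai = γ·α^BB1 + (1−γ)·α^BB2. Then γ·α^BB1 + (1−γ)·α^BB2 − ⟨y,Ay⟩/⟨y,y⟩ ≠ 0, and there exists exactly one τ ≥ 0 such that α^RBB(τ) = α^Dai; moreover this τ is given by τ = (1−γ)(α^BB1 − α^BB2)·‖s‖² / ( ‖y‖²·(γ·α^BB1 + (1−γ)·α^BB2 − ⟨y,Ay⟩/⟨y,y⟩) ). -/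
open scoped RealInnerProductSpace
open Matrix

private lemma bridge_aux (n : ℕ) (x z : EuclideanSpace ℝ (Fin n)) :
    ⟪x, z⟫ = dotProduct x z := by
  simp [PiLp.inner_apply, dotProduct, RCLike.inner_apply, mul_comm]

private lemma dsymm_aux (n : ℕ) (A : Matrix (Fin n) (Fin n) ℝ)
    (hsymm : ∀ i j, A i j = A j i) (u v : Fin n → ℝ) :
    dotProduct u (A *ᵥ v) = dotProduct v (A *ᵥ u) := by
  simp only [Matrix.mulVec, dotProduct, Finset.mul_sum]
  rw [Finset.sum_comm]
  apply Finset.sum_congr rfl; intro i _; apply Finset.sum_congr rfl; intro j _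
  rw [hsymm i j]; ring

private lemma dot_self_pos (n : ℕ) (v : Fin n → ℝ) (hv : v ≠ 0) :
    0 < dotProduct v v := by
  obtain ⟨i, hi⟩ := Function.ne_iff.mp hv
  simp only [dotProduct]
  exact Finset.sum_pos' (fun j _ => mul_self_nonneg _)
    ⟨i, Finset.mem_univ i, mul_self_pos.mpr hi⟩

/-- Strict Cauchy-Schwarz for the quadratic form of a positive definite matrix. -/
private lemma acs_aux (n : ℕ) (A : Matrix (Fin n) (Fin n) ℝ)
    (hApos : ∀ v : Fin n → ℝ, v ≠ 0 → 0 < dotProduct v (A *ᵥ v))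
    (hsym : ∀ u v : Fin n → ℝ, dotProduct u (A *ᵥ v) = dotProduct v (A *ᵥ u))
    (s y : Fin n → ℝ) (hnotpar : ∀ μ : ℝ, y ≠ μ • s) (hs : s ≠ 0) :
    dotProduct s (A *ᵥ y) * dotProduct s (A *ᵥ y)
      < dotProduct s (A *ᵥ s) * dotProduct y (A *ᵥ y) := by
  have hy0 : y ≠ 0 := fun h => hnotpar 0 (by simp [h])
  have hb' := hApos s hs
  have hd' := hApos y hy0
  set b' := dotProduct s (A *ᵥ s) with hb'_def
  set c' := dotProduct s (A *ᵥ y) with hc'_def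
  set d' := dotProduct y (A *ᵥ y) with hd'_def
  have hv : d' • s - c' • y ≠ 0 := by
    intro h
    have h2 : d' • s = c' • y := sub_eq_zero.mp h
    by_cases hc0 : c' = 0
    · rw [hc0, zero_smul] at h2
      apply hs
      have h3 := congrArg (fun v => (d'⁻¹ : ℝ) • v) h2
      simpa [smul_smul, inv_mul_cancel₀ hd'.ne'] using h3
    · apply hnotpar (d' / c')
      have h3 := congrArg (fun v => (c'⁻¹ : ℝ) • v) h2
      simp only [smul_smul, inv_mul_cancel₀ hc0, one_smul] at h3
      rw [div_eq_inv_mul]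
      exact h3.symm
  have hq := hApos _ hv
  rw [Matrix.mulVec_sub, Matrix.mulVec_smul, Matrix.mulVec_smul] at hq
  simp only [sub_dotProduct, dotProduct_sub,
    smul_dotProduct, dotProduct_smul, smul_eq_mul] at hq
  rw [hsym y s, ← hb'_def, ← hc'_def, ← hd'_def] at hq
  nlinarith [hq, hd']

set_option maxHeartbeats 1600000 in
/-- For a symmetric positive definite `A`, a nonzero `s` which is not an
eigenvector of `A`, `y = As`, and `γ ∈ [0,1]` with `α^Dai = γα^BB1 + (1−γ)α^BB2`:
the quantity `γα^BB1 + (1−γ)α^BB2 − ⟨y,Ay⟩/⟨y,y⟩` is nonzero, and there exists exactly one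
`τ ≥ 0` with `α^RBB(τ) = α^Dai`, namely
`τ = (1−γ)(α^BB1−α^BB2)‖s‖²/(‖y‖²(γα^BB1+(1−γ)α^BB2−⟨y,Ay⟩/⟨y,y⟩))`. -/
theorem rbb_equals_dai_unique_tau
    (n : ℕ) (A : Matrix (Fin n) (Fin n) ℝ) (hA : A.PosDef)
    (s : EuclideanSpace ℝ (Fin n)) (hs : s ≠ 0)
    (hnev : ∀ μ : ℝ, (WithLp.toLp 2 (A.mulVec s) : EuclideanSpace ℝ (Fin n)) ≠ μ • s)
    (y : EuclideanSpace ℝ (Fin n)) (hy : y = (WithLp.toLp 2 (A.mulVec s) : EuclideanSpace ℝ (Fin n)))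
    (γ : ℝ) (hγ : γ ∈ Set.Icc (0 : ℝ) 1)
    (αBB1 αBB2 αDai : ℝ)
    (hBB1 : αBB1 = ⟪s, y⟫ / ⟪s, s⟫)
    (hBB2 : αBB2 = ⟪y, y⟫ / ⟪s, y⟫)
    (hDai : αDai = γ * αBB1 + (1 - γ) * αBB2)
    (αRBB : ℝ → ℝ)
    (hRBB : ∀ τ : ℝ, αRBB τ =
      ⟪s, (WithLp.toLp 2 ((1 + τ • (A * A)).mulVec y) : EuclideanSpace ℝ (Fin n))⟫ /
      ⟪s, (WithLp.toLp 2 ((1 + τ • (A * A)).mulVec s) : EuclideanSpace ℝ (Fin n))⟫)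
    (τ₀ : ℝ)
    (hτ₀ : τ₀ = (1 - γ) * (αBB1 - αBB2) * ‖s‖ ^ 2 /
      (‖y‖ ^ 2 * (γ * αBB1 + (1 - γ) * αBB2
        - ⟪y, (WithLp.toLp 2 (A.mulVec y) : EuclideanSpace ℝ (Fin n))⟫ / ⟪y, y⟫))) :
    γ * αBB1 + (1 - γ) * αBB2
      - ⟪y, (WithLp.toLp 2 (A.mulVec y) : EuclideanSpace ℝ (Fin n))⟫ / ⟪y, y⟫ ≠ 0 ∧
    0 ≤ τ₀ ∧ αRBB τ₀ = αDai ∧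
    ∀ τ : ℝ, 0 ≤ τ → αRBB τ = αDai → τ = τ₀ := by
  obtain ⟨hγ0, hγ1⟩ := hγ
  have hsymm : ∀ i j, A i j = A j i := fun i j => by
    have h := congrFun (congrFun hA.1 j) i; simpa using h
  have bridge := bridge_aux n
  have dsymm := dsymm_aux n A hsymm
  have hpos : ∀ v : EuclideanSpace ℝ (Fin n), v ≠ 0 →
      0 < dotProduct v (A *ᵥ v) := fun v hv => by
    simpa using hA.dotProduct_mulVec_pos (x := (v : Fin n → ℝ)) (by simpa using hv)
  have hnotpar : ∀ μ : ℝ, (y : Fin n → ℝ) ≠ μ • (s : Fin n → ℝ) := fun μ h => by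
    apply hnev μ
    rw [← hy]
    exact WithLp.ofLp_injective 2 (by simpa using h)
  have hy' : (y : Fin n → ℝ) = A *ᵥ (s : Fin n → ℝ) := by simp [hy]
  have hs' : (s : Fin n → ℝ) ≠ 0 := by simpa using hs
  -- the two strict Cauchy-Schwarz inequalities, at dot-product level
  have hCS1raw := acs_aux n 1 (fun v hv => by
      simpa [Matrix.one_mulVec] using dot_self_pos n v hv)
    (fun u v => by rw [Matrix.one_mulVec, Matrix.one_mulVec, dotProduct_comm])
    s y hnotpar hs'
  have hCS2raw := acs_aux n A (fun v hv => hpos (WithLp.toLp 2 v) (by simpa using hv)) dsymm s y hnotpar hs'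
  simp only [Matrix.one_mulVec] at hCS1raw
  rw [← real_inner_self_eq_norm_sq, ← real_inner_self_eq_norm_sq] at hτ₀
  simp only [bridge, WithLp.ofLp_toLp] at hBB1 hBB2 hτ₀ hRBB ⊢
  -- relations among the four scalars
  have hsAy : dotProduct s (A *ᵥ y) = dotProduct y y := by
    rw [dsymm s y, ← hy']
  have hbb : dotProduct s (A *ᵥ s) = dotProduct s y := by rw [hy']
  have hsAAy : dotProduct s (A *ᵥ (A *ᵥ y))
      = dotProduct y (A *ᵥ y) := by
    rw [dsymm s (A *ᵥ y), ← hy', dotProduct_comm]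
  rw [hsAy, hbb] at hCS2raw
  -- expansion of αRBB
  have hnum : ∀ τ : ℝ, dotProduct s ((1 + τ • (A * A)) *ᵥ y)
      = dotProduct s y + τ * dotProduct y (A *ᵥ y) := by
    intro τ
    rw [Matrix.add_mulVec, Matrix.one_mulVec, Matrix.smul_mulVec,
      dotProduct_add, dotProduct_smul, ← Matrix.mulVec_mulVec,
      hsAAy, smul_eq_mul]
  have hden : ∀ τ : ℝ, dotProduct s ((1 + τ • (A * A)) *ᵥ s)
      = dotProduct s s + τ * dotProduct y y := by
    intro τ
    rw [Matrix.add_mulVec, Matrix.one_mulVec, Matrix.smul_mulVec,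
      dotProduct_add, dotProduct_smul, ← Matrix.mulVec_mulVec,
      ← hy', hsAy, smul_eq_mul]
  simp only [hnum, hden] at hRBB
  -- positivity
  have hy0 : y ≠ 0 := by
    intro h; apply hnev 0; rw [← hy, h]; simp
  have ha : 0 < dotProduct s s := dot_self_pos n s hs'
  have hc : 0 < dotProduct y y := dot_self_pos n y (by simpa using hy0)
  have hb : 0 < dotProduct s y := by rw [← hbb]; exact hpos s hs
  have hd : 0 < dotProduct y (A *ᵥ y) := hpos y hy0
  -- now make everything opaque real numbers
  set a := dotProduct s s with ha_def
  set b := dotProduct s y with hb_def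
  set c := dotProduct y y with hc_def
  set d := dotProduct y (A *ᵥ y) with hd_def
  clear_value a b c d
  clear hnum hden hsAy hbb hsAAy hnotpar hpos dsymm bridge hsymm hy hs hy0 hnev hA
  -- pure real arithmetic from here on
  have hCS1 : b * b < a * c := hCS1raw
  have hCS2 : c * c < b * d := hCS2raw
  have h1 : b / a < c / b := by rw [div_lt_div_iff₀ ha hb]; nlinarith
  have h2 : c / b < d / c := by rw [div_lt_div_iff₀ hb hc]; nlinarith
  have hDneg : γ * αBB1 + (1 - γ) * αBB2 - d / c < 0 := by
    rw [hBB1, hBB2]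
    nlinarith [h1, h2, mul_nonneg hγ0 (sub_nonneg.mpr h1.le)]
  have hE : αDai * c - d < 0 := by
    have h3 : αDai - d / c < 0 := by rw [hDai]; exact hDneg
    have h4 := mul_neg_of_neg_of_pos h3 hc
    have h5 : (αDai - d / c) * c = αDai * c - d := by field_simp
    linarith [h5 ▸ h4]
  have hdenpos : 0 < d - αDai * c := by linarith
  have hKey : b * (αDai * a - b) = (1 - γ) * (a * c - b * b) := by
    rw [hDai, hBB1, hBB2]; field_simp; ring
  have hP' : c * (γ * (b / a) + (1 - γ) * (c / b) - d / c) = αDai * c - d := by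
    rw [hDai, hBB1, hBB2]; field_simp
  have hX' : (1 - γ) * (b / a - c / b) * a = (1 - γ) * (b * b - a * c) / b := by
    field_simp
  have ht : τ₀ = ((1 - γ) * (b * b - a * c) / b) / (αDai * c - d) := by
    rw [hτ₀, hBB1, hBB2, hX', hP']
  have hQ : (1 - γ) * (b * b - a * c) / b = -(αDai * a - b) := by
    rw [eq_comm, eq_div_iff hb.ne']
    linarith [hKey]
  have hτ₀' : τ₀ = (αDai * a - b) / (d - αDai * c) := by
    rw [ht, hQ, neg_div, ← div_neg, neg_sub]
  have hnum0 : 0 ≤ αDai * a - b := by nlinarith [hKey, hCS1, hγ1, hb]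
  have hτ₀nonneg : 0 ≤ τ₀ := by
    rw [hτ₀']; exact div_nonneg hnum0 hdenpos.le
  have hmain : τ₀ * (d - αDai * c) = αDai * a - b := by
    rw [hτ₀']; exact div_mul_cancel₀ _ hdenpos.ne'
  refine ⟨hDneg.ne, hτ₀nonneg, ?_, ?_⟩
  · have hd0 : 0 < a + τ₀ * c := by nlinarith [ha, hc, hτ₀nonneg]
    rw [hRBB τ₀, div_eq_iff hd0.ne']
    linear_combination hmain
  · intro τ hτ hτeq
    have hd0 : 0 < a + τ * c := by nlinarith [ha, hc, hτ]
    rw [hRBB τ, div_eq_iff hd0.ne'] at hτeq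
    have h6 : τ * (d - αDai * c) = τ₀ * (d - αDai * c) := by
      rw [hmain]; linear_combination hτeq
    exact mul_right_cancel₀ hdenpos.ne' h6
end

section
/- Let A be an n×n real symmetric positive definite matrix, let s ∈ ℝ^n with s ≠ 0 and suppose s is not an eigenvector of A; set y = As. Then α^BB2 − ⟨y,Ay⟩/⟨y,y⟩ < 0, the number τ = (α^BB1 − α^BB2)·‖s‖² / ( ‖y‖²·(α^BB2 − ⟨y,Ay⟩/⟨y,y⟩) ) satisfies τ > 0, and with this choice α^RBB(τ) = α^BB2. -/
open scoped RealInnerProductSpace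

lemma euc_inner_self_pos {n : ℕ} {u : EuclideanSpace ℝ (Fin n)} (hu : u ≠ 0) :
    0 < ⟪u, u⟫ :=
  lt_of_le_of_ne real_inner_self_nonneg (Ne.symm (inner_self_ne_zero.2 hu))

lemma inner_mulVec_symm {n : ℕ} {A : Matrix (Fin n) (Fin n) ℝ}
    (hA : A.transpose = A) (u v : EuclideanSpace ℝ (Fin n)) :
    ⟪u, (WithLp.toLp 2 (A.mulVec v) : EuclideanSpace ℝ (Fin n))⟫ =
      ⟪v, (WithLp.toLp 2 (A.mulVec u) : EuclideanSpace ℝ (Fin n))⟫ := by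
  simp only [PiLp.inner_apply, RCLike.inner_apply, starRingEnd_apply, star_trivial,
    Matrix.mulVec, dotProduct, Finset.mul_sum, Finset.sum_mul]
  rw [Finset.sum_comm]
  refine Finset.sum_congr rfl fun j _ => Finset.sum_congr rfl fun i _ => ?_
  have hij : A i j = A j i := by
    have h0 : A.transpose j i = A j i := by rw [hA]
    rw [Matrix.transpose_apply] at h0
    exact h0
  rw [hij]; ring

lemma inner_mulVec_pos {n : ℕ} {A : Matrix (Fin n) (Fin n) ℝ}
    (hA : A.PosDef) {u : EuclideanSpace ℝ (Fin n)} (hu : u ≠ 0) :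
    0 < ⟪u, (WithLp.toLp 2 (A.mulVec u) : EuclideanSpace ℝ (Fin n))⟫ := by
  have h := hA.dotProduct_mulVec_pos (x := u.ofLp) (by simpa using hu)
  simpa [PiLp.inner_apply, RCLike.inner_apply, dotProduct, mul_comm] using h

set_option maxHeartbeats 1000000 in
/-- For a symmetric positive definite `A`, a nonzero `s` which is not an
eigenvector of `A`, and `y = As`: `α^BB2 − ⟨y,Ay⟩/⟨y,y⟩ < 0`, the parameter
`τ = (α^BB1 − α^BB2)‖s‖²/(‖y‖²(α^BB2 − ⟨y,Ay⟩/⟨y,y⟩))` is positive, and with this `τ`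
one has `α^RBB(τ) = α^BB2`. -/
theorem rbb_recovers_bb2
    (n : ℕ) (A : Matrix (Fin n) (Fin n) ℝ) (hA : A.PosDef)
    (s : EuclideanSpace ℝ (Fin n)) (hs : s ≠ 0)
    (hnev : ∀ μ : ℝ, (WithLp.toLp 2 (A.mulVec s) : EuclideanSpace ℝ (Fin n)) ≠ μ • s)
    (y : EuclideanSpace ℝ (Fin n)) (hy : y = (WithLp.toLp 2 (A.mulVec s) : EuclideanSpace ℝ (Fin n)))
    (αBB1 αBB2 : ℝ)
    (hBB1 : αBB1 = ⟪s, y⟫ / ⟪s, s⟫)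
    (hBB2 : αBB2 = ⟪y, y⟫ / ⟪s, y⟫)
    (αRBB : ℝ → ℝ)
    (hRBB : ∀ τ : ℝ, αRBB τ =
      ⟪s, (WithLp.toLp 2 ((1 + τ • (A * A)).mulVec y) : EuclideanSpace ℝ (Fin n))⟫ /
      ⟪s, (WithLp.toLp 2 ((1 + τ • (A * A)).mulVec s) : EuclideanSpace ℝ (Fin n))⟫)
    (τ : ℝ)
    (hτ : τ = (αBB1 - αBB2) * ‖s‖ ^ 2 /
      (‖y‖ ^ 2 * (αBB2 - ⟪y, (WithLp.toLp 2 (A.mulVec y) : EuclideanSpace ℝ (Fin n))⟫ / ⟪y, y⟫))) :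
    αBB2 - ⟪y, (WithLp.toLp 2 (A.mulVec y) : EuclideanSpace ℝ (Fin n))⟫ / ⟪y, y⟫ < 0 ∧
    0 < τ ∧ αRBB τ = αBB2 := by
  have hAt : A.transpose = A := by
    have h := hA.1.eq
    rwa [Matrix.conjTranspose_eq_transpose_of_trivial] at h
  set a : ℝ := ⟪s, s⟫ with ha_def
  set b : ℝ := ⟪s, y⟫ with hb_def
  set c : ℝ := ⟪y, y⟫ with hc_def
  set d : ℝ := ⟪y, (WithLp.toLp 2 (A.mulVec y) : EuclideanSpace ℝ (Fin n))⟫ with hd_def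
  clear_value a b c d
  have hy0 : y ≠ 0 := by
    intro h
    exact hnev 0 (by rw [← hy, h]; simp)
  have ha : 0 < a := by rw [ha_def]; exact euc_inner_self_pos hs
  have hc : 0 < c := by rw [hc_def]; exact euc_inner_self_pos hy0
  have hb : 0 < b := by
    rw [hb_def, hy]; exact inner_mulVec_pos hA hs
  -- ⟪s, A y⟫ = ⟪y, y⟫ = c
  have hsAy : ⟪s, (WithLp.toLp 2 (A.mulVec y) : EuclideanSpace ℝ (Fin n))⟫ = c := by
    rw [inner_mulVec_symm hAt, ← hy, hc_def]
  -- strict Cauchy-Schwarz: a * c > b ^ 2, via w = a • y - b • s ≠ 0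
  have hw1 : a • y - b • s ≠ 0 := by
    intro h
    have h' : a • y = b • s := sub_eq_zero.1 h
    have h'' := congrArg (fun w : EuclideanSpace ℝ (Fin n) => a⁻¹ • w) h'
    simp only [smul_smul, inv_mul_cancel₀ ha.ne', one_smul] at h''
    exact hnev (a⁻¹ * b) (by rw [← hy, h''])
  have hac : b ^ 2 < a * c := by
    have h1 : 0 < ⟪a • y - b • s, a • y - b • s⟫ := euc_inner_self_pos hw1
    have h2 : ⟪a • y - b • s, a • y - b • s⟫ = a * (a * c - b ^ 2) := by
      simp only [inner_sub_left, inner_sub_right, real_inner_smul_left, real_inner_smul_right]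
      rw [ha_def, hb_def, hc_def, real_inner_comm y s]
      ring
    nlinarith
  -- strict Cauchy-Schwarz in A-form: b * d > c ^ 2, via w = b • y - c • s ≠ 0
  have hw2 : b • y - c • s ≠ 0 := by
    intro h
    have h' : b • y = c • s := sub_eq_zero.1 h
    have h'' := congrArg (fun w : EuclideanSpace ℝ (Fin n) => b⁻¹ • w) h'
    simp only [smul_smul, inv_mul_cancel₀ hb.ne', one_smul] at h''
    exact hnev (b⁻¹ * c) (by rw [← hy, h''])
  have hbd : c ^ 2 < b * d := by
    have h1 : 0 < ⟪b • y - c • s, (WithLp.toLp 2 (A.mulVec (b • y - c • s)) : EuclideanSpace ℝ (Fin n))⟫ :=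
      inner_mulVec_pos hA hw2
    have hmv : (WithLp.toLp 2 (A.mulVec (b • y - c • s)) : EuclideanSpace ℝ (Fin n)) =
        b • (WithLp.toLp 2 (A.mulVec y) : EuclideanSpace ℝ (Fin n)) - c • (WithLp.toLp 2 (A.mulVec s) : EuclideanSpace ℝ (Fin n)) := by
      simp only [Matrix.mulVec_sub, Matrix.mulVec_smul, WithLp.toLp_sub, WithLp.toLp_smul]
    have h3 : ⟪y, (WithLp.toLp 2 (A.mulVec s) : EuclideanSpace ℝ (Fin n))⟫ = c := by
      rw [← hy, hc_def]
    have h4 : ⟪s, (WithLp.toLp 2 (A.mulVec s) : EuclideanSpace ℝ (Fin n))⟫ = b := by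
      rw [hb_def, hy]
    have h2 : ⟪b • y - c • s, (WithLp.toLp 2 (A.mulVec (b • y - c • s)) : EuclideanSpace ℝ (Fin n))⟫ =
        b * (b * d - c ^ 2) := by
      rw [hmv]
      simp only [inner_sub_left, inner_sub_right, real_inner_smul_left, real_inner_smul_right]
      rw [h3, h4, hsAy, hd_def]
      ring
    nlinarith
  -- norms
  have hns : ‖s‖ ^ 2 = a := by rw [ha_def]; exact (real_inner_self_eq_norm_sq s).symm
  have hny : ‖y‖ ^ 2 = c := by rw [hc_def]; exact (real_inner_self_eq_norm_sq y).symm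
  -- claim 1
  have hgap : αBB2 - d / c < 0 := by
    rw [hBB2, sub_neg, div_lt_div_iff₀ hb hc]
    nlinarith
  -- τ value
  have hden : 0 < b * d - c ^ 2 := by nlinarith
  have hgap2 : c / b - d / c < 0 := by
    rw [← hBB2]; exact hgap
  have hτval : τ = (a * c - b ^ 2) / (b * d - c ^ 2) := by
    rw [hτ, hBB1, hBB2, hns, hny,
      div_eq_div_iff (mul_neg_of_pos_of_neg hc hgap2).ne hden.ne']
    field_simp
    ring
  have hτpos : 0 < τ := by
    rw [hτval]
    exact div_pos (by nlinarith) hden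
  -- αRBB τ = αBB2
  have hAAy : ⟪s, (WithLp.toLp 2 ((A * A).mulVec y) : EuclideanSpace ℝ (Fin n))⟫ = d := by
    rw [← Matrix.mulVec_mulVec, inner_mulVec_symm hAt, ← hy, hd_def]
    exact real_inner_comm _ _
  have hAAs : ⟪s, (WithLp.toLp 2 ((A * A).mulVec s) : EuclideanSpace ℝ (Fin n))⟫ = c := by
    rw [← Matrix.mulVec_mulVec, inner_mulVec_symm hAt, ← hy, hc_def]
  have hip : ∀ u v : EuclideanSpace ℝ (Fin n),
      ⟪u, v⟫ = dotProduct (u : Fin n → ℝ) (v : Fin n → ℝ) := by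
    intro u v
    simp [PiLp.inner_apply, RCLike.inner_apply, dotProduct, mul_comm]
  have hnum : ⟪s, (WithLp.toLp 2 ((1 + τ • (A * A)).mulVec y) : EuclideanSpace ℝ (Fin n))⟫ = b + τ * d := by
    rw [hip, Matrix.add_mulVec, Matrix.one_mulVec, Matrix.smul_mulVec,
      dotProduct_add, dotProduct_smul, ← hip s y, ← hip s, hAAy,
      smul_eq_mul, hb_def]
  have hdenu : ⟪s, (WithLp.toLp 2 ((1 + τ • (A * A)).mulVec s) : EuclideanSpace ℝ (Fin n))⟫ = a + τ * c := by
    rw [hip, Matrix.add_mulVec, Matrix.one_mulVec, Matrix.smul_mulVec,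
      dotProduct_add, dotProduct_smul, ← hip s s, ← hip s, hAAs,
      smul_eq_mul, ha_def]
  have hfin : αRBB τ = αBB2 := by
    rw [hRBB, hnum, hdenu, hBB2]
    have hac' : 0 < a + τ * c := by nlinarith
    rw [div_eq_div_iff hac'.ne' hb.ne']
    have ht : τ * (b * d - c ^ 2) = a * c - b ^ 2 := by
      rw [hτval, div_mul_cancel₀ _ hden.ne']
    nlinarith [ht]
  exact ⟨hgap, hτpos, hfin⟩
end

section
/- In the coordinate model of the RBB iteration, let m be an integer with 1 ≤ m < n. If for every i ∈ {1,…,m} the sequence (e_i^k)_{k≥0} converges to 0 as k → ∞, then liminf_{k→∞} |e_{m+1}^k| = 0. -/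
set_option maxHeartbeats 1000000 in
/-- In the coordinate model of the RBB iteration (dimension `n+1 ≥ 1`,
eigenvalues `0 < λ_1 ≤ … ≤ λ_n`, regularization parameters `0 ≤ τ_k ≤ T`,
`λ_1 ≤ α_0 ≤ λ_n`, `e^k ≠ 0`, `e_i^{k+1} = (1 − λ_i/α_k)e_i^k`, and
`α_{k+1} = (Σ λ_i³(1+τ_kλ_i²)(e_i^k)²)/(Σ λ_i²(1+τ_kλ_i²)(e_i^k)²)`):
if `e_i^k → 0` for every `i ∈ {1,…,m}` where `1 ≤ m < n`, then
`liminf_k |e_{m+1}^k| = 0`. -/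
theorem rbb_coordinate_liminf_next_component
    (n : ℕ) (lam : Fin (n + 1) → ℝ) (hpos : 0 < lam 0) (hmono : Monotone lam)
    (T : ℝ) (hT : 0 ≤ T)
    (e : ℕ → Fin (n + 1) → ℝ) (α τ : ℕ → ℝ)
    (hτ : ∀ k, 0 ≤ τ k ∧ τ k ≤ T)
    (hα0 : lam 0 ≤ α 0 ∧ α 0 ≤ lam (Fin.last n))
    (he : ∀ k, e k ≠ 0)
    (hrec : ∀ k i, e (k + 1) i = (1 - lam i / α k) * e k i)
    (hα : ∀ k, α (k + 1) =
      (∑ i, lam i ^ 3 * (1 + τ k * lam i ^ 2) * e k i ^ 2) /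
      (∑ i, lam i ^ 2 * (1 + τ k * lam i ^ 2) * e k i ^ 2))
    (m : ℕ) (hm1 : 1 ≤ m) (hm2 : m < n + 1)
    (hconv : ∀ i : Fin (n + 1), (i : ℕ) < m →
      Filter.Tendsto (fun k => e k i) Filter.atTop (nhds 0)) :
    Filter.liminf (fun k => |e k ⟨m, hm2⟩|) Filter.atTop = 0 := by
  classical
  set i₀ : Fin (n + 1) := ⟨m, hm2⟩ with hi₀def
  have hlam : ∀ i : Fin (n + 1), 0 < lam i :=
    fun i => lt_of_lt_of_le hpos (hmono (Fin.zero_le i))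
  have hlamu : ∀ i : Fin (n + 1), lam i ≤ lam (Fin.last n) :=
    fun i => hmono (Fin.le_last i)
  set lm : ℝ := lam i₀ with hlmdef
  have hlm : 0 < lm := hlam i₀
  have hlmu : lm ≤ lam (Fin.last n) := hlamu i₀
  -- nonnegativity of the weights
  have hwnn : ∀ k i, 0 ≤ lam i ^ 2 * (1 + τ k * lam i ^ 2) * e k i ^ 2 := by
    intro k i
    have h1 : (0:ℝ) ≤ 1 + τ k * lam i ^ 2 := by nlinarith [(hτ k).1, sq_nonneg (lam i)]
    have := sq_nonneg (lam i)
    have := sq_nonneg (e k i)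
    positivity
  -- positivity of the denominator
  have hD : ∀ k, 0 < ∑ i, lam i ^ 2 * (1 + τ k * lam i ^ 2) * e k i ^ 2 := by
    intro k
    obtain ⟨j, hj⟩ := Function.ne_iff.mp (he k)
    refine Finset.sum_pos' (fun i _ => hwnn k i) ⟨j, Finset.mem_univ j, ?_⟩
    have h2 : (0:ℝ) < e k j ^ 2 := pow_two_pos_of_ne_zero hj
    have h3 : (0:ℝ) < lam j ^ 2 := pow_two_pos_of_ne_zero (hlam j).ne'
    have h4 : (0:ℝ) < 1 + τ k * lam j ^ 2 := by nlinarith [(hτ k).1, sq_nonneg (lam j)]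
    exact mul_pos (mul_pos h3 h4) h2
  -- rewrite the numerator
  have hnum : ∀ k, (∑ i, lam i ^ 3 * (1 + τ k * lam i ^ 2) * e k i ^ 2)
      = ∑ i, lam i * (lam i ^ 2 * (1 + τ k * lam i ^ 2) * e k i ^ 2) := by
    intro k; exact Finset.sum_congr rfl (fun i _ => by ring)
  -- upper bound for α (k+1)
  have hαup : ∀ k, α (k + 1) ≤ lam (Fin.last n) := by
    intro k
    rw [hα k, div_le_iff₀ (hD k), hnum k, Finset.mul_sum]
    refine Finset.sum_le_sum (fun i _ => ?_)
    exact mul_le_mul_of_nonneg_right (hlamu i) (hwnn k i)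
  -- the key frequent smallness statement
  have key : ∀ ε : ℝ, 0 < ε → ∃ᶠ k in Filter.atTop, |e k i₀| < ε := by
    intro ε hε
    by_contra hC
    rw [Filter.not_frequently] at hC
    simp only [not_lt] at hC
    -- hC : ∀ᶠ k in atTop, ε ≤ |e k i₀|
    set c : ℝ := lm ^ 2 * ε ^ 2 with hcdef
    have hc : 0 < c := by positivity
    set S : Finset (Fin (n + 1)) := Finset.univ.filter (fun i => (i : ℕ) < m) with hSdef
    -- the "small" part of the denominator tends to 0
    have hsmall : Filter.Tendsto
        (fun k => ∑ i ∈ S, lam i ^ 2 * (1 + T * lam i ^ 2) * e k i ^ 2)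
        Filter.atTop (nhds 0) := by
      have hterm : ∀ i ∈ S, Filter.Tendsto
          (fun k => lam i ^ 2 * (1 + T * lam i ^ 2) * e k i ^ 2)
          Filter.atTop (nhds 0) := by
        intro i hi
        have hi' : (i : ℕ) < m := by
          simpa [hSdef, Finset.mem_filter] using hi
        have h2 := (hconv i hi').mul (hconv i hi')
        rw [mul_zero] at h2
        have h3 := h2.const_mul (lam i ^ 2 * (1 + T * lam i ^ 2))
        rw [mul_zero] at h3
        simpa [pow_two] using h3
      have := tendsto_finset_sum S (fun i hi => hterm i hi)
      simpa using this
    have hsmall' : ∀ᶠ k in Filter.atTop,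
        (∑ i ∈ S, lam i ^ 2 * (1 + T * lam i ^ 2) * e k i ^ 2) < c / 3 :=
      hsmall.eventually_lt_const (by positivity)
    obtain ⟨K, hK⟩ := Filter.eventually_atTop.mp (hC.and hsmall')
    -- lower bound on α (k+1) for k ≥ K
    have hαlow : ∀ k, K ≤ k → (3 / 4) * lm ≤ α (k + 1) := by
      intro k hk
      rw [hα k, le_div_iff₀ (hD k), hnum k]
      have hsplit :
          (∑ i, lam i ^ 2 * (1 + τ k * lam i ^ 2) * e k i ^ 2)
          = (∑ i ∈ S, lam i ^ 2 * (1 + τ k * lam i ^ 2) * e k i ^ 2)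
            + ∑ i ∈ Finset.univ.filter (fun i : Fin (n + 1) => ¬ (i : ℕ) < m),
                lam i ^ 2 * (1 + τ k * lam i ^ 2) * e k i ^ 2 := by
        simp only [hSdef]
        exact (Finset.sum_filter_add_sum_filter_not Finset.univ
          (fun i : Fin (n + 1) => (i : ℕ) < m) _).symm
      set DS : ℝ := ∑ i ∈ S, lam i ^ 2 * (1 + τ k * lam i ^ 2) * e k i ^ 2 with hDSdef
      set DB : ℝ := ∑ i ∈ Finset.univ.filter (fun i : Fin (n + 1) => ¬ (i : ℕ) < m),
          lam i ^ 2 * (1 + τ k * lam i ^ 2) * e k i ^ 2 with hDBdef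
      have hDSnn : 0 ≤ DS := Finset.sum_nonneg (fun i _ => hwnn k i)
      have hDBnn : 0 ≤ DB := Finset.sum_nonneg (fun i _ => hwnn k i)
      -- DS < c/3
      have hDSle : DS < c / 3 := by
        refine lt_of_le_of_lt ?_ (hK k hk).2
        refine Finset.sum_le_sum (fun i _ => ?_)
        have h1 : (0:ℝ) ≤ 1 + τ k * lam i ^ 2 := by
          nlinarith [(hτ k).1, sq_nonneg (lam i)]
        have h2 : 1 + τ k * lam i ^ 2 ≤ 1 + T * lam i ^ 2 := by
          nlinarith [(hτ k).2, sq_nonneg (lam i)]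
        exact mul_le_mul_of_nonneg_right
          (mul_le_mul_of_nonneg_left h2 (sq_nonneg (lam i))) (sq_nonneg (e k i))
      -- DB ≥ c
      have hi₀mem : i₀ ∈ Finset.univ.filter (fun i : Fin (n + 1) => ¬ (i : ℕ) < m) := by
        simp [hi₀def]
      have hDBge : c ≤ DB := by
        have hle : lam i₀ ^ 2 * (1 + τ k * lam i₀ ^ 2) * e k i₀ ^ 2 ≤ DB := by
          have := Finset.single_le_sum (f := fun i =>
              lam i ^ 2 * (1 + τ k * lam i ^ 2) * e k i ^ 2)
            (fun i _ => hwnn k i) hi₀mem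
          simpa [hDBdef] using this
        have heps : ε ^ 2 ≤ e k i₀ ^ 2 := by
          have := (hK k hk).1
          nlinarith [abs_nonneg (e k i₀), sq_abs (e k i₀)]
        have h1 : (1:ℝ) ≤ 1 + τ k * lam i₀ ^ 2 := by
          nlinarith [(hτ k).1, sq_nonneg (lam i₀)]
        have hterm : c ≤ lam i₀ ^ 2 * (1 + τ k * lam i₀ ^ 2) * e k i₀ ^ 2 := by
          rw [hcdef, hlmdef]
          have t1 : lam i₀ ^ 2 * ε ^ 2 ≤ lam i₀ ^ 2 * e k i₀ ^ 2 :=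
            mul_le_mul_of_nonneg_left heps (sq_nonneg _)
          nlinarith [t1, h1, mul_nonneg (sq_nonneg (lam i₀)) (sq_nonneg (e k i₀))]
        linarith
      -- the numerator dominates lm * DB
      have hNge : lm * DB ≤ ∑ i, lam i * (lam i ^ 2 * (1 + τ k * lam i ^ 2) * e k i ^ 2) := by
        have h1 : lm * DB = ∑ i ∈ Finset.univ.filter (fun i : Fin (n + 1) => ¬ (i : ℕ) < m),
            lm * (lam i ^ 2 * (1 + τ k * lam i ^ 2) * e k i ^ 2) := by
          rw [hDBdef, Finset.mul_sum]
        rw [h1]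
        refine le_trans (Finset.sum_le_sum (fun i hi => ?_))
          (Finset.sum_le_sum_of_subset_of_nonneg (Finset.filter_subset _ _)
            (fun i _ _ => mul_nonneg (hlam i).le (hwnn k i)))
        have hi' : ¬ (i : ℕ) < m := by
          simpa [Finset.mem_filter] using hi
        have : lm ≤ lam i := by
          apply hmono
          rw [Fin.le_def]
          simpa [hi₀def] using Nat.le_of_not_lt hi'
        exact mul_le_mul_of_nonneg_right this (hwnn k i)
      rw [hsplit]
      nlinarith [hNge, hDSle, hDBge, hDSnn, hDBnn, hlm,
        mul_nonneg hlm.le (sub_nonneg.mpr hDBge),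
        mul_nonneg hlm.le (sub_nonneg.mpr hDSle.le)]
    -- contraction factor
    set q : ℝ := max (1 / 3 : ℝ) (1 - lm / lam (Fin.last n)) with hqdef
    have hq0 : (0:ℝ) ≤ q := le_trans (by norm_num) (le_max_left _ _)
    have hq1 : q < 1 := by
      apply max_lt (by norm_num)
      have : 0 < lm / lam (Fin.last n) := div_pos hlm (hlam _)
      linarith
    -- one-step contraction for k ≥ K + 1
    have hcon : ∀ k, K + 1 ≤ k → |e (k + 1) i₀| ≤ q * |e k i₀| := by
      intro k hk
      obtain ⟨j, rfl⟩ : ∃ j, k = j + 1 := ⟨k - 1, by omega⟩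
      have hj : K ≤ j := by omega
      have hα1 : (3 / 4) * lm ≤ α (j + 1) := hαlow j hj
      have hα2 : α (j + 1) ≤ lam (Fin.last n) := hαup j
      have hαpos : 0 < α (j + 1) := lt_of_lt_of_le (by linarith) hα1
      have hfac : |1 - lm / α (j + 1)| ≤ q := by
        rw [abs_le]
        constructor
        · have h34 : (0:ℝ) < (3 / 4) * lm := by linarith
          have hdiv : lm / α (j + 1) ≤ lm / ((3 / 4) * lm) :=
            div_le_div_of_nonneg_left hlm.le h34 hα1
          have heq : lm / ((3 / 4) * lm) = 4 / 3 := by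
            field_simp
          have h13 : (1/3 : ℝ) ≤ q := le_max_left _ _
          rw [heq] at hdiv
          linarith
        · have hdiv : lm / lam (Fin.last n) ≤ lm / α (j + 1) :=
            div_le_div_of_nonneg_left hlm.le hαpos hα2
          have hq2 : 1 - lm / lam (Fin.last n) ≤ q := le_max_right _ _
          linarith
      calc |e (j + 1 + 1) i₀| = |1 - lm / α (j + 1)| * |e (j + 1) i₀| := by
            rw [hrec (j + 1) i₀, abs_mul]
        _ ≤ q * |e (j + 1) i₀| := mul_le_mul_of_nonneg_right hfac (abs_nonneg _)
    -- geometric decay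
    have hgeo : ∀ j : ℕ, |e (K + 1 + j) i₀| ≤ q ^ j * |e (K + 1) i₀| := by
      intro j
      induction j with
      | zero => simp
      | succ j ih =>
        have h1 : |e (K + 1 + j + 1) i₀| ≤ q * |e (K + 1 + j) i₀| :=
          hcon (K + 1 + j) (by omega)
        have h2 : q * |e (K + 1 + j) i₀| ≤ q * (q ^ j * |e (K + 1) i₀|) :=
          mul_le_mul_of_nonneg_left ih hq0
        calc |e (K + 1 + (j + 1)) i₀| = |e (K + 1 + j + 1) i₀| := by ring_nf
          _ ≤ q * (q ^ j * |e (K + 1) i₀|) := le_trans h1 h2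
          _ = q ^ (j + 1) * |e (K + 1) i₀| := by ring
    -- contradiction
    have htend : Filter.Tendsto (fun j : ℕ => q ^ j * |e (K + 1) i₀|)
        Filter.atTop (nhds 0) := by
      have := (tendsto_pow_atTop_nhds_zero_of_lt_one hq0 hq1).mul_const (|e (K + 1) i₀|)
      simpa using this
    obtain ⟨j, hj⟩ := (htend.eventually_lt_const hε).exists
    have hεle : ε ≤ |e (K + 1 + j) i₀| := (hK (K + 1 + j) (by omega)).1
    have := lt_of_le_of_lt (hgeo j) hj
    linarith
  -- conclude : liminf = 0
  have hbdd : Filter.IsBoundedUnder (· ≥ ·) Filter.atTop (fun k => |e k i₀|) :=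
    Filter.isBoundedUnder_of ⟨0, fun k => abs_nonneg _⟩
  have h1 : Filter.liminf (fun k => |e k i₀|) Filter.atTop ≤ 0 := by
    refine le_of_forall_pos_le_add (fun ε hε => ?_)
    have := Filter.liminf_le_of_frequently_le
      ((key ε hε).mono (fun k h => h.le)) hbdd
    linarith
  have hcob : Filter.IsCoboundedUnder (· ≥ ·) Filter.atTop (fun k => |e k i₀|) :=
    Filter.IsCoboundedUnder.of_frequently_le ((key 1 one_pos).mono (fun k h => h.le))
  have h2 : (0:ℝ) ≤ Filter.liminf (fun k => |e k i₀|) Filter.atTop :=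
    Filter.le_liminf_of_le hcob (Filter.Eventually.of_forall (fun k => abs_nonneg _))
  exact le_antisymm h1 h2
end

section
/- Let A be an n×n real symmetric positive definite matrix, b ∈ ℝ^n, and let x* be the unique solution of Ax = b. Let T ≥ 0 and let τ : ℕ → ℝ with 0 ≤ τ_k ≤ T for all k. Let α : ℕ → ℝ with λ_min(A) ≤ α_0 ≤ λ_max(A), and let x : ℕ → ℝ^n satisfy x_{k+1} = x_k − (1/α_k)·g_k where g_k = Ax_k − b, with g_k ≠ 0 for all k, and where for all k ≥ 0, writing s_k = x_{k+1} − x_k and y_k = g_{k+1} − g_k, the scalars satisfy α_{k+1} = ⟨s_k, (I+τ_k A²)y_k⟩ / ⟨s_k, (I+τ_k A²)s_k⟩. Then lim_{k→∞} ‖x* − x_k‖ = 0, i.e. the RBB iterates converge to the solution. -/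
open scoped RealInnerProductSpace

/-- The matrix `A` acting on Euclidean space in the usual way (`A.mulVec`). -/
noncomputable def mulVecE {n : ℕ} (A : Matrix (Fin n) (Fin n) ℝ)
    (v : EuclideanSpace ℝ (Fin n)) : EuclideanSpace ℝ (Fin n) :=
  WithLp.toLp 2 (A.mulVec v)

section helpers
variable {n : ℕ} {A : Matrix (Fin n) (Fin n) ℝ}

lemma inner_mulVecE_symm (hH : A.IsHermitian) (v w : EuclideanSpace ℝ (Fin n)) :
    ⟪mulVecE A v, w⟫ = ⟪v, mulVecE A w⟫ := by
  have hsym : ∀ i j, A i j = A j i := fun i j => by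
    have := hH.apply i j
    simpa using this.symm
  simp only [mulVecE, PiLp.inner_apply, RCLike.inner_apply, starRingEnd_apply, star_trivial,
    Matrix.mulVec, dotProduct, Finset.sum_mul, Finset.mul_sum]
  rw [Finset.sum_comm]
  refine Finset.sum_congr rfl fun i _ => Finset.sum_congr rfl fun j _ => ?_
  rw [hsym j i]; ring

lemma inner_basis_mulVecE (hH : A.IsHermitian) (i : Fin n) (v : EuclideanSpace ℝ (Fin n)) :
    ⟪hH.eigenvectorBasis i, mulVecE A v⟫ = hH.eigenvalues i * ⟪hH.eigenvectorBasis i, v⟫ := by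
  rw [← inner_mulVecE_symm hH, show mulVecE A (hH.eigenvectorBasis i)
      = hH.eigenvalues i • hH.eigenvectorBasis i from congrArg (WithLp.toLp 2) (hH.mulVec_eigenvectorBasis i),
    real_inner_smul_left]

lemma inner_eq_sum_basis (B : OrthonormalBasis (Fin n) ℝ (EuclideanSpace ℝ (Fin n)))
    (v w : EuclideanSpace ℝ (Fin n)) :
    ⟪v, w⟫ = ∑ i, ⟪B i, v⟫ * ⟪B i, w⟫ := by
  rw [← B.sum_inner_mul_inner v w]
  exact Finset.sum_congr rfl fun i _ => by rw [real_inner_comm v (B i)]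

lemma mulVecE_reg (t : ℝ) (w : EuclideanSpace ℝ (Fin n)) :
    mulVecE (1 + t • (A * A)) w = w + t • mulVecE A (mulVecE A w) := by
  show WithLp.toLp 2 ((1 + t • (A * A)).mulVec w) = _
  rw [Matrix.add_mulVec, Matrix.one_mulVec, Matrix.smul_mulVec, WithLp.toLp_add]
  congr 1
  show WithLp.toLp 2 (t • (A * A).mulVec w) = t • WithLp.toLp 2 (A.mulVec (A.mulVec w))
  rw [Matrix.mulVec_mulVec]; rfl

lemma mulVecE_sub (v w : EuclideanSpace ℝ (Fin n)) :
    mulVecE A (v - w) = mulVecE A v - mulVecE A w := by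
  show WithLp.toLp 2 (A.mulVec (v - w)) = _
  rw [Matrix.mulVec_sub]; rfl

lemma mulVecE_smul (t : ℝ) (v : EuclideanSpace ℝ (Fin n)) :
    mulVecE A (t • v) = t • mulVecE A v := by
  show WithLp.toLp 2 (A.mulVec (t • v)) = _
  rw [Matrix.mulVec_smul]; rfl

/-- quadratic form in eigencoordinates, plain version -/
lemma quad_plain (hH : A.IsHermitian) (t : ℝ) (v : EuclideanSpace ℝ (Fin n)) :
    ⟪v, mulVecE (1 + t • (A * A)) v⟫
      = ∑ i, (1 + t * hH.eigenvalues i ^ 2) * ⟪hH.eigenvectorBasis i, v⟫ ^ 2 := by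
  rw [mulVecE_reg, inner_add_right, real_inner_smul_right,
    show ⟪v, mulVecE A (mulVecE A v)⟫ = ⟪mulVecE A v, mulVecE A v⟫ from
      (inner_mulVecE_symm hH v (mulVecE A v)).symm,
    inner_eq_sum_basis hH.eigenvectorBasis v v,
    inner_eq_sum_basis hH.eigenvectorBasis (mulVecE A v) (mulVecE A v)]
  simp only [inner_basis_mulVecE hH]
  rw [Finset.mul_sum, ← Finset.sum_add_distrib]
  exact Finset.sum_congr rfl fun i _ => by ring

/-- quadratic form against `A v` in eigencoordinates -/
lemma quad_A (hH : A.IsHermitian) (t : ℝ) (v : EuclideanSpace ℝ (Fin n)) :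
    ⟪v, mulVecE (1 + t • (A * A)) (mulVecE A v)⟫
      = ∑ i, (1 + t * hH.eigenvalues i ^ 2) * hH.eigenvalues i
          * ⟪hH.eigenvectorBasis i, v⟫ ^ 2 := by
  rw [mulVecE_reg, inner_add_right, real_inner_smul_right,
    show ⟪v, mulVecE A (mulVecE A (mulVecE A v))⟫
        = ⟪mulVecE A v, mulVecE A (mulVecE A v)⟫ from
      (inner_mulVecE_symm hH v (mulVecE A (mulVecE A v))).symm,
    inner_eq_sum_basis hH.eigenvectorBasis v (mulVecE A v),
    inner_eq_sum_basis hH.eigenvectorBasis (mulVecE A v) (mulVecE A (mulVecE A v))]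
  simp only [inner_basis_mulVecE hH]
  rw [Finset.mul_sum, ← Finset.sum_add_distrib]
  exact Finset.sum_congr rfl fun i _ => by ring

end helpers

open Filter in

lemma rbb_scalar_machine (u f ε : ℕ → ℝ) (C c : ℝ) (hC : 1 ≤ C)
    (hc0 : 0 ≤ c) (hc : c < 1)
    (hu : ∀ k, 0 ≤ u k) (hf0 : ∀ k, 0 ≤ f k) (hfC : ∀ k, f k ≤ C)
    (hrec : ∀ k, u (k + 1) = f k * u k)
    (hεlim : Tendsto ε atTop (nhds 0))
    (H : ∀ k, 0 < u k → ε k ≤ u k → f (k + 1) ≤ c) :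
    Tendsto u atTop (nhds 0) := by
  have hC0 : (0:ℝ) < C := lt_of_lt_of_le one_pos hC
  rw [Metric.tendsto_atTop]
  intro E hE
  set ee : ℝ := E / (2 * C ^ 2) with hee
  have hee0 : 0 < ee := by positivity
  -- pick K with ε k < ee for k ≥ K
  obtain ⟨K, hK⟩ : ∃ K, ∀ k ≥ K, ε k < ee := by
    have := (Metric.tendsto_atTop.mp hεlim) ee hee0
    obtain ⟨K, hK⟩ := this
    exact ⟨K, fun k hk => by
      have := hK k hk
      simpa [Real.dist_eq] using lt_of_le_of_lt (le_abs_self _) (by simpa [Real.dist_eq] using this)⟩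
  -- step 1 : some k₀ ≥ K with u k₀ < ee
  obtain ⟨k₀, hk₀K, hk₀⟩ : ∃ k₀ ≥ K, u k₀ < ee := by
    by_contra hcon
    push_neg at hcon
    have hbig : ∀ k ≥ K, ee ≤ u k := hcon
    have hshrink : ∀ k ≥ K, u (k + 2) ≤ c * u (k + 1) := by
      intro k hk
      have h1 : f (k + 1) ≤ c := H k (lt_of_lt_of_le hee0 (hbig k hk)) ((hK k hk).le.trans (hbig k hk))
      rw [hrec (k + 1)]
      exact mul_le_mul_of_nonneg_right h1 (hu _)
    have hgeo : ∀ m, u (K + 1 + m) ≤ c ^ m * u (K + 1) := by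
      intro m
      induction m with
      | zero => simp
      | succ m ih =>
        have : u (K + 1 + m + 1) ≤ c * u (K + 1 + m) := by
          have := hshrink (K + m) (Nat.le_add_right _ _)
          have e1 : K + m + 2 = K + 1 + m + 1 := by ring
          have e2 : K + m + 1 = K + 1 + m := by ring
          rwa [e1, e2] at this
        calc u (K + 1 + (m + 1)) = u (K + 1 + m + 1) := by ring_nf
          _ ≤ c * u (K + 1 + m) := this
          _ ≤ c * (c ^ m * u (K + 1)) := mul_le_mul_of_nonneg_left ih hc0
          _ = c ^ (m + 1) * u (K + 1) := by ring
    -- contradiction : geometric decay below ee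
    have hu1 : 0 < u (K + 1) := lt_of_lt_of_le hee0 (hbig _ (Nat.le_succ_of_le le_rfl))
    obtain ⟨m, hm⟩ := exists_pow_lt_of_lt_one (div_pos hee0 hu1) hc
    have : u (K + 1 + m) < ee := by
      calc u (K + 1 + m) ≤ c ^ m * u (K + 1) := hgeo m
        _ < ee / u (K + 1) * u (K + 1) := by
            exact mul_lt_mul_of_pos_right hm hu1
        _ = ee := div_mul_cancel₀ _ hu1.ne'
    exact absurd this (not_lt.mpr (hbig _ (by omega)))
  -- step 2 : invariant J m on pairs (u (k₀+m), u (k₀+m+1))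
  have hJ : ∀ m, u (k₀ + m + 1) ≤ C * ee ∨
      (ee ≤ u (k₀ + m) ∧ u (k₀ + m + 1) ≤ C ^ 2 * ee) := by
    intro m
    induction m with
    | zero =>
      left
      rw [hrec]
      calc f k₀ * u k₀ ≤ C * u k₀ := mul_le_mul_of_nonneg_right (hfC _) (hu _)
        _ ≤ C * ee := mul_le_mul_of_nonneg_left hk₀.le hC0.le
    | succ m ih =>
      set j := k₀ + m with hj
      have hjK : K ≤ j := le_trans hk₀K (Nat.le_add_right _ _)
      have e1 : k₀ + (m + 1) = j + 1 := by omega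
      rw [e1]
      by_cases hb : u (j + 1) < ee
      · left
        rw [hrec]
        calc f (j + 1) * u (j + 1) ≤ C * u (j + 1) :=
              mul_le_mul_of_nonneg_right (hfC _) (hu _)
          _ ≤ C * ee := mul_le_mul_of_nonneg_left hb.le hC0.le
      · push_neg at hb
        right
        refine ⟨hb, ?_⟩
        rcases ih with h1 | h2
        · rw [hrec]
          calc f (j + 1) * u (j + 1) ≤ C * u (j + 1) :=
                mul_le_mul_of_nonneg_right (hfC _) (hu _)
            _ ≤ C * (C * ee) := mul_le_mul_of_nonneg_left h1 hC0.le
            _ = C ^ 2 * ee := by ring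
        · obtain ⟨ha, hb2⟩ := h2
          have hfc : f (j + 1) ≤ c := H j (lt_of_lt_of_le hee0 ha) ((hK j hjK).le.trans ha)
          rw [hrec]
          calc f (j + 1) * u (j + 1) ≤ c * u (j + 1) :=
                mul_le_mul_of_nonneg_right hfc (hu _)
            _ ≤ 1 * u (j + 1) := mul_le_mul_of_nonneg_right hc.le (hu _)
            _ = u (j + 1) := one_mul _
            _ ≤ C ^ 2 * ee := hb2
  -- conclude
  refine ⟨k₀, fun j hjk => ?_⟩
  have hCee : C * ee ≤ C ^ 2 * ee := by
    have : C * ee ≤ C * (C * ee) := by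
      nlinarith [mul_nonneg hC0.le hee0.le]
    calc C * ee ≤ C * (C * ee) := this
      _ = C ^ 2 * ee := by ring
  have hub : u j ≤ C ^ 2 * ee := by
    rcases Nat.lt_or_ge j (k₀ + 1) with hlt | hge
    · have : j = k₀ := by omega
      subst this
      have h1 : ee ≤ C ^ 2 * ee := by nlinarith
      linarith [hk₀]
    · obtain ⟨m, hm⟩ : ∃ m, j = k₀ + m + 1 := ⟨j - k₀ - 1, by omega⟩
      subst hm
      rcases hJ m with h | h
      · exact h.trans hCee
      · exact h.2
  have hfin : C ^ 2 * ee = E / 2 := by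
    rw [hee]
    field_simp
  rw [Real.dist_eq, sub_zero, abs_of_nonneg (hu j)]
  calc u j ≤ C ^ 2 * ee := hub
    _ = E / 2 := hfin
    _ < E := by linarith


set_option maxHeartbeats 2000000 in
/-- Global convergence of the RBB method: for the strictly convex
quadratic with symmetric positive definite Hessian `A` and solution `Ax* = b`,
the iterates `x_{k+1} = x_k − (1/α_k)g_k` with `g_k = Ax_k − b ≠ 0`,
`λ_min(A) ≤ α_0 ≤ λ_max(A)`, regularization parameters `0 ≤ τ_k ≤ T` and
`α_{k+1} = ⟨s_k,(I+τ_kA²)y_k⟩/⟨s_k,(I+τ_kA²)s_k⟩` (with `s_k = x_{k+1}−x_k`,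
`y_k = g_{k+1}−g_k`) satisfy `‖x* − x_k‖ → 0`. -/
theorem rbb_global_convergence
    (n : ℕ) (hn : 0 < n)
    (A : Matrix (Fin n) (Fin n) ℝ) (hA : A.PosDef)
    (b xstar : EuclideanSpace ℝ (Fin n))
    (hxstar : mulVecE A xstar = b)
    (T : ℝ) (τ : ℕ → ℝ) (hτ : ∀ k, 0 ≤ τ k ∧ τ k ≤ T)
    (α : ℕ → ℝ)
    (hα0 : (⨅ i, hA.isHermitian.eigenvalues i) ≤ α 0 ∧
           α 0 ≤ ⨆ i, hA.isHermitian.eigenvalues i)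
    (x g : ℕ → EuclideanSpace ℝ (Fin n))
    (hg : ∀ k, g k = mulVecE A (x k) - b)
    (hgne : ∀ k, g k ≠ 0)
    (hx : ∀ k, x (k + 1) = x k - (1 / α k) • g k)
    (hαrec : ∀ k, α (k + 1) =
      ⟪x (k + 1) - x k, mulVecE (1 + τ k • (A * A)) (g (k + 1) - g k)⟫ /
      ⟪x (k + 1) - x k, mulVecE (1 + τ k • (A * A)) (x (k + 1) - x k)⟫) :
    Filter.Tendsto (fun k => ‖xstar - x k‖) Filter.atTop (nhds 0) := by
  classical
  haveI : Nonempty (Fin n) := ⟨⟨0, hn⟩⟩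
  set lam : Fin n → ℝ := hA.isHermitian.eigenvalues with hlamdef
  set B := hA.isHermitian.eigenvectorBasis with hBdef
  -- basic spectral facts
  have hlam_pos : ∀ i, 0 < lam i := fun i => hA.eigenvalues_pos i
  set m := ⨅ i, lam i with hmdef
  set M := ⨆ i, lam i with hMdef
  have hm_le : ∀ i, m ≤ lam i := fun i => ciInf_le (Set.Finite.bddBelow (Set.finite_range lam)) i
  have hM_ge : ∀ i, lam i ≤ M := fun i => le_ciSup (Set.Finite.bddAbove (Set.finite_range lam)) i
  have hm0 : 0 < m := by
    obtain ⟨i₀, hi₀⟩ := Finite.exists_min lam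
    exact lt_of_lt_of_le (hlam_pos i₀) (le_ciInf hi₀)
  have hM0 : 0 < M := lt_of_lt_of_le (hlam_pos (Classical.arbitrary _)) (hM_ge _)
  have hmM : m ≤ M := le_trans (hm_le (Classical.arbitrary _)) (hM_ge _)
  have hT0 : 0 ≤ T := le_trans (hτ 0).1 (hτ 0).2
  -- eigencoordinates of the gradient
  set d : ℕ → Fin n → ℝ := fun k i => ⟪B i, g k⟫ with hddef
  have hgrec : ∀ k, g (k + 1) = g k - (1 / α k) • mulVecE A (g k) := by
    intro k
    rw [hg (k + 1), hx k, mulVecE_sub, mulVecE_smul, hg k]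
    abel
  have hd : ∀ k i, d (k + 1) i = (1 - lam i / α k) * d k i := by
    intro k i
    show ⟪B i, g (k + 1)⟫ = (1 - lam i / α k) * ⟪B i, g k⟫
    rw [hgrec k, inner_sub_right, real_inner_smul_right, inner_basis_mulVecE]
    simp only [div_eq_mul_inv, one_div]
    ring
  set Num : ℕ → ℝ := fun k => ∑ i, (1 + τ k * lam i ^ 2) * lam i * (d k i) ^ 2 with hNumdef
  set Den : ℕ → ℝ := fun k => ∑ i, (1 + τ k * lam i ^ 2) * (d k i) ^ 2 with hDendef
  have hw1 : ∀ k i, (1 : ℝ) ≤ 1 + τ k * lam i ^ 2 := fun k i => by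
    nlinarith [(hτ k).1, sq_nonneg (lam i)]
  have hdne : ∀ k, ∃ i, d k i ≠ 0 := by
    intro k
    by_contra hcon
    push_neg at hcon
    apply hgne k
    have h0 : ⟪g k, g k⟫ = 0 := by
      rw [inner_eq_sum_basis B (g k) (g k)]
      exact Finset.sum_eq_zero fun i _ => by
        have := hcon i
        simp only [hddef] at this
        simp [this]
    exact inner_self_eq_zero.mp h0
  have hDenpos : ∀ k, 0 < Den k := by
    intro k
    obtain ⟨i, hi⟩ := hdne k
    refine Finset.sum_pos' (fun j _ => by nlinarith [hw1 k j, sq_nonneg (d k j)])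
      ⟨i, Finset.mem_univ i, ?_⟩
    have h1 := hw1 k i
    have h2 : 0 < (d k i) ^ 2 := by positivity
    nlinarith
  -- the quotient formula
  have hform : ∀ k, α k ≠ 0 → α (k + 1) = Num k / Den k := by
    intro k hak
    have hs : x (k + 1) - x k = (-(1 / α k)) • g k := by
      rw [hx k, neg_smul]
      abel
    have hy : g (k + 1) - g k = mulVecE A (x (k + 1) - x k) := by
      rw [mulVecE_sub, hg (k + 1), hg k]
      abel
    rw [hαrec k, hy, hs, quad_A hA.isHermitian (τ k) ((-(1 / α k)) • g k),
      quad_plain hA.isHermitian (τ k) ((-(1 / α k)) • g k)]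
    simp only [real_inner_smul_right]
    have hc2 : ((-(1 / α k)) ^ 2) ≠ 0 := pow_ne_zero _ (neg_ne_zero.mpr (one_div_ne_zero hak))
    have e1 : (∑ i, (1 + τ k * lam i ^ 2) * lam i * (-(1 / α k) * ⟪B i, g k⟫) ^ 2)
        = (-(1 / α k)) ^ 2 * Num k := by
      rw [hNumdef, Finset.mul_sum]
      exact Finset.sum_congr rfl fun i _ => by
        show _ = _ * ((1 + τ k * lam i ^ 2) * lam i * (⟪B i, g k⟫) ^ 2)
        ring
    have e2 : (∑ i, (1 + τ k * lam i ^ 2) * (-(1 / α k) * ⟪B i, g k⟫) ^ 2)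
        = (-(1 / α k)) ^ 2 * Den k := by
      rw [hDendef, Finset.mul_sum]
      exact Finset.sum_congr rfl fun i _ => by
        show _ = _ * ((1 + τ k * lam i ^ 2) * (⟪B i, g k⟫) ^ 2)
        ring
    rw [e1, e2, mul_div_mul_left _ _ hc2]
  -- Rayleigh bounds
  have hbound : ∀ k, m ≤ Num k / Den k ∧ Num k / Den k ≤ M := by
    intro k
    have hD := hDenpos k
    constructor
    · rw [le_div_iff₀ hD]
      have hterm : ∀ i ∈ Finset.univ, m * ((1 + τ k * lam i ^ 2) * (d k i) ^ 2)
          ≤ (1 + τ k * lam i ^ 2) * lam i * (d k i) ^ 2 := by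
        intro i _
        have h1 : (0:ℝ) ≤ (1 + τ k * lam i ^ 2) * (d k i) ^ 2 := by
          nlinarith [hw1 k i, sq_nonneg (d k i)]
        nlinarith [hm_le i]
      calc m * Den k = ∑ i, m * ((1 + τ k * lam i ^ 2) * (d k i) ^ 2) := by
            rw [hDendef, Finset.mul_sum]
        _ ≤ Num k := Finset.sum_le_sum hterm
    · rw [div_le_iff₀ hD]
      have hterm : ∀ i ∈ Finset.univ, (1 + τ k * lam i ^ 2) * lam i * (d k i) ^ 2
          ≤ M * ((1 + τ k * lam i ^ 2) * (d k i) ^ 2) := by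
        intro i _
        have h1 : (0:ℝ) ≤ (1 + τ k * lam i ^ 2) * (d k i) ^ 2 := by
          nlinarith [hw1 k i, sq_nonneg (d k i)]
        nlinarith [hM_ge i]
      calc Num k ≤ ∑ i, M * ((1 + τ k * lam i ^ 2) * (d k i) ^ 2) := Finset.sum_le_sum hterm
        _ = M * Den k := by rw [hDendef, Finset.mul_sum]
  have hαb : ∀ k, m ≤ α k ∧ α k ≤ M := by
    intro k
    induction k with
    | zero => exact hα0
    | succ k ih =>
      have hak : α k ≠ 0 := (lt_of_lt_of_le hm0 ih.1).ne'
      rw [hform k hak]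
      exact hbound k
  have hαpos : ∀ k, 0 < α k := fun k => lt_of_lt_of_le hm0 (hαb k).1
  -- per-component convergence core
  have hcore : ∀ i, (∀ j, lam j < lam i → Filter.Tendsto (fun k => d k j) Filter.atTop (nhds 0)) →
      Filter.Tendsto (fun k => d k i) Filter.atTop (nhds 0) := by
    intro i hIH
    set F := Finset.univ.filter (fun j => lam j < lam i) with hFdef
    set W := 1 + T * M ^ 2 with hWdef
    have hW1 : (1 : ℝ) ≤ W := by nlinarith [sq_nonneg M]
    set Q : ℕ → ℝ := fun k => ∑ j ∈ F, (d k j) ^ 2 with hQdef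
    have hQ0 : ∀ k, 0 ≤ Q k := fun k => Finset.sum_nonneg fun j _ => sq_nonneg _
    have hQlim : Filter.Tendsto Q Filter.atTop (nhds 0) := by
      have h1 : Filter.Tendsto (fun k => ∑ j ∈ F, (d k j) ^ 2) Filter.atTop
          (nhds (∑ j ∈ F, 0)) := by
        refine tendsto_finset_sum _ fun j hj => ?_
        have hj' : lam j < lam i := (Finset.mem_filter.mp hj).2
        have h := hIH j hj'
        have h2 := h.mul h
        rw [mul_zero] at h2
        refine h2.congr fun k => ?_
        rw [pow_two]
      rwa [Finset.sum_const_zero] at h1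
    set c : ℝ := max (1 / 2) (1 - m / M) with hcdef
    have hc0 : (0 : ℝ) ≤ c := le_trans (by norm_num) (le_max_left _ _)
    have hc1 : c < 1 := by
      refine max_lt (by norm_num) ?_
      have : 0 < m / M := div_pos hm0 hM0
      linarith
    have hC1 : (1 : ℝ) ≤ M / m := (one_le_div hm0).mpr hmM
    have habs : Filter.Tendsto (fun k => |d k i|) Filter.atTop (nhds 0) := by
      refine rbb_scalar_machine (fun k => |d k i|) (fun k => |1 - lam i / α k|)
        (fun k => Real.sqrt (2 * W * Q k)) (M / m) c hC1 hc0 hc1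
        (fun k => abs_nonneg _) (fun k => abs_nonneg _) ?_ ?_ ?_ ?_
      · -- f ≤ C
        intro k
        have h1 := hαpos k
        have h2 := (hαb k).1
        have h3 := (hαb k).2
        rw [abs_le]
        constructor
        · have h4 : lam i / α k ≤ M / m := by
            apply div_le_div₀ hM0.le (hM_ge i) hm0 h2
          have h5 : 0 < M / m := div_pos hM0 hm0
          linarith
        · have h4 : 0 ≤ lam i / α k := le_of_lt (div_pos (hlam_pos i) h1)
          linarith
      · -- recurrence
        intro k
        show |d (k + 1) i| = |1 - lam i / α k| * |d k i|
        rw [hd k i, abs_mul]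
      · -- epsilon tends to zero
        have h1 : Filter.Tendsto (fun k => 2 * W * Q k) Filter.atTop (nhds (2 * W * 0)) :=
          hQlim.const_mul (2 * W)
        rw [mul_zero] at h1
        have h2 := h1.sqrt
        rwa [Real.sqrt_zero] at h2
      · -- the key shrinking condition
        intro k hpos hle
        replace hpos : 0 < |d k i| := hpos
        replace hle : Real.sqrt (2 * W * Q k) ≤ |d k i| := hle
        have hdne0 : d k i ≠ 0 := fun h0 => by simp [h0] at hpos
        have h2WQ : 0 ≤ 2 * W * Q k := by nlinarith [hQ0 k]
        have hu2 : 2 * W * Q k ≤ (d k i) ^ 2 := by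
          calc 2 * W * Q k = (Real.sqrt (2 * W * Q k)) ^ 2 := (Real.sq_sqrt h2WQ).symm
            _ ≤ |d k i| ^ 2 := pow_le_pow_left₀ (Real.sqrt_nonneg _) hle 2
            _ = (d k i) ^ 2 := sq_abs _
        set q := ∑ j ∈ F, (1 + τ k * lam j ^ 2) * (d k j) ^ 2 with hqdef
        set r := ∑ j ∈ Finset.univ.filter (fun j => ¬ lam j < lam i),
            (1 + τ k * lam j ^ 2) * (d k j) ^ 2 with hrdef
        have hsplitD : Den k = q + r := by
          rw [hDendef, hqdef, hrdef, hFdef]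
          exact (Finset.sum_filter_add_sum_filter_not Finset.univ
            (fun j => lam j < lam i) _).symm
        have hqW : q ≤ W * Q k := by
          rw [hqdef, hQdef, Finset.mul_sum]
          refine Finset.sum_le_sum fun j _ => ?_
          have h1 : lam j ^ 2 ≤ M ^ 2 := by nlinarith [hlam_pos j, hM_ge j]
          have h2 := (hτ k).1
          have h3 := (hτ k).2
          have h4 : τ k * lam j ^ 2 ≤ T * M ^ 2 :=
            mul_le_mul h3 h1 (sq_nonneg (lam j)) hT0
          nlinarith [sq_nonneg (d k j), hWdef]
        have hq0 : 0 ≤ q := Finset.sum_nonneg fun j _ => by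
          nlinarith [hw1 k j, sq_nonneg (d k j)]
        have hrP : (d k i) ^ 2 ≤ r := by
          have hmem : i ∈ Finset.univ.filter (fun j => ¬ lam j < lam i) := by simp
          have h1 : ∀ j ∈ Finset.univ.filter (fun j => ¬ lam j < lam i),
              0 ≤ (1 + τ k * lam j ^ 2) * (d k j) ^ 2 := fun j _ => by
            nlinarith [hw1 k j, sq_nonneg (d k j)]
          calc (d k i) ^ 2 ≤ (1 + τ k * lam i ^ 2) * (d k i) ^ 2 := by
                nlinarith [hw1 k i, sq_nonneg (d k i)]
            _ ≤ r := Finset.single_le_sum h1 hmem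
        have hNr : lam i * r ≤ Num k := by
          have hsplitN : Num k = (∑ j ∈ F, (1 + τ k * lam j ^ 2) * lam j * (d k j) ^ 2)
              + ∑ j ∈ Finset.univ.filter (fun j => ¬ lam j < lam i),
                  (1 + τ k * lam j ^ 2) * lam j * (d k j) ^ 2 := by
            rw [hNumdef, hFdef]
            exact (Finset.sum_filter_add_sum_filter_not Finset.univ
              (fun j => lam j < lam i) _).symm
          have h1 : 0 ≤ ∑ j ∈ F, (1 + τ k * lam j ^ 2) * lam j * (d k j) ^ 2 :=
            Finset.sum_nonneg fun j _ =>
              mul_nonneg (mul_nonneg (le_trans zero_le_one (hw1 k j)) (hlam_pos j).le)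
                (sq_nonneg (d k j))
          have h2 : lam i * r ≤ ∑ j ∈ Finset.univ.filter (fun j => ¬ lam j < lam i),
              (1 + τ k * lam j ^ 2) * lam j * (d k j) ^ 2 := by
            rw [hrdef, Finset.mul_sum]
            refine Finset.sum_le_sum fun j hj => ?_
            have h3 : lam i ≤ lam j := not_lt.mp (Finset.mem_filter.mp hj).2
            have h4 : (0:ℝ) ≤ 1 + τ k * lam j ^ 2 := le_trans zero_le_one (hw1 k j)
            nlinarith [mul_nonneg (mul_nonneg (sub_nonneg.mpr h3) h4) (sq_nonneg (d k j))]
          linarith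
        have hq2 : q ≤ r / 2 := by nlinarith [hu2, hqW, hrP]
        have hr0 : 0 < r := lt_of_lt_of_le (by positivity) hrP
        have hak : α k ≠ 0 := (hαpos k).ne'
        have hα1 : 2 / 3 * lam i ≤ α (k + 1) := by
          rw [hform k hak, le_div_iff₀ (hDenpos k), hsplitD]
          nlinarith [hlam_pos i]
        have hα2 : α (k + 1) ≤ M := (hαb (k + 1)).2
        have hαp : 0 < α (k + 1) :=
          lt_of_lt_of_le (mul_pos (by norm_num) (hlam_pos i)) hα1
        rw [abs_le]
        constructor
        · have h5 : lam i / α (k + 1) ≤ 3 / 2 := by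
            rw [div_le_iff₀ hαp]
            nlinarith [hlam_pos i]
          have h6 : (1 : ℝ) / 2 ≤ c := le_max_left _ _
          linarith
        · have h7 : m / M ≤ lam i / α (k + 1) :=
            div_le_div₀ (hlam_pos i).le (hm_le i) hαp hα2
          have h8 : 1 - m / M ≤ c := le_max_right _ _
          linarith
    rw [tendsto_zero_iff_abs_tendsto_zero]
    exact habs
  -- strong induction over eigenvalue levels
  have hmain : ∀ N i, (Finset.univ.filter fun j => lam j < lam i).card ≤ N →
      Filter.Tendsto (fun k => d k i) Filter.atTop (nhds 0) := by
    intro N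
    induction N with
    | zero =>
      intro i hi
      refine hcore i fun j hj => ?_
      exfalso
      rw [Nat.le_zero, Finset.card_eq_zero] at hi
      have hmem : j ∈ Finset.univ.filter fun j' => lam j' < lam i :=
        Finset.mem_filter.mpr ⟨Finset.mem_univ j, hj⟩
      rw [hi] at hmem
      exact Finset.notMem_empty j hmem
    | succ N ih =>
      intro i hi
      refine hcore i fun j hj => ih j ?_
      have hjmem : j ∈ Finset.univ.filter fun j' => lam j' < lam i :=
        Finset.mem_filter.mpr ⟨Finset.mem_univ j, hj⟩
      have hsub : (Finset.univ.filter fun j' => lam j' < lam j)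
          ⊆ (Finset.univ.filter fun j' => lam j' < lam i).erase j := by
        intro a ha
        have ha' : lam a < lam j := (Finset.mem_filter.mp ha).2
        refine Finset.mem_erase.mpr ⟨?_, ?_⟩
        · intro h0
          rw [h0] at ha'
          exact lt_irrefl _ ha'
        · exact Finset.mem_filter.mpr ⟨Finset.mem_univ a, lt_trans ha' hj⟩
      have h1 := Finset.card_le_card hsub
      rw [Finset.card_erase_of_mem hjmem] at h1
      have h2 : 1 ≤ (Finset.univ.filter fun j' => lam j' < lam i).card :=
        Finset.card_pos.mpr ⟨j, hjmem⟩
      omega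
  have hdall : ∀ i, Filter.Tendsto (fun k => d k i) Filter.atTop (nhds 0) :=
    fun i => hmain _ i le_rfl
  -- translate back to the iterates
  have hAe : ∀ k, mulVecE A (xstar - x k) = -(g k) := by
    intro k
    rw [mulVecE_sub, hxstar, hg k]
    abel
  have he : ∀ k i, ⟪B i, xstar - x k⟫ = -(d k i) / lam i := by
    intro k i
    have h1 : lam i * ⟪B i, xstar - x k⟫ = -(d k i) := by
      rw [← inner_basis_mulVecE hA.isHermitian i (xstar - x k), hAe k]
      show ⟪B i, -(g k)⟫ = -(d k i)
      rw [inner_neg_right]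
    rw [eq_div_iff (hlam_pos i).ne']
    linear_combination h1
  have hnorm : ∀ k, ‖xstar - x k‖ = Real.sqrt (∑ i, (d k i / lam i) ^ 2) := by
    intro k
    rw [← Real.sqrt_sq (norm_nonneg (xstar - x k))]
    congr 1
    rw [← real_inner_self_eq_norm_sq, inner_eq_sum_basis B]
    refine Finset.sum_congr rfl fun i _ => ?_
    rw [he k i]
    ring
  have hfinal : Filter.Tendsto (fun k => ∑ i, (d k i / lam i) ^ 2) Filter.atTop (nhds 0) := by
    have h1 : Filter.Tendsto (fun k => ∑ i, (d k i / lam i) ^ 2) Filter.atTop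
        (nhds (∑ i : Fin n, 0)) := by
      refine tendsto_finset_sum _ fun i _ => ?_
      have h2 := (hdall i).div_const (lam i)
      rw [zero_div] at h2
      have h3 := h2.mul h2
      rw [mul_zero] at h3
      refine h3.congr fun k => ?_
      rw [pow_two]
    rwa [Finset.sum_const_zero] at h1
  have h4 := hfinal.sqrt
  rw [Real.sqrt_zero] at h4
  refine h4.congr fun k => ?_
  rw [hnorm k]
end

section
/- In the coordinate model of the RBB iteration, let k ≥ 1 and let i ∈ {1,…,n} be such that e_i^k is in shrinking mode, i.e. Σ_{j=1}^n (λ_j − λ_i)·(e_j^{k-1})²·λ_j²·(1+τ_{k-1}λ_j²) ≥ 0. Then |e_i^{k+1}| ≤ (1 − λ_1/λ_n)·|e_i^k|. -/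
/-!
Write `w_j = λ_j² (1 + τ_k λ_j²) (e_j^k)² ≥ 0`. Then `α_{k+1}` is the `w`-weighted mean of the
`λ_j`, so `α_{k+1} ≤ λ_n`, and the shrinking-mode condition `Σ_j (λ_j - λ_i) w_j ≥ 0` says
exactly that this mean is at least `λ_i`. Hence `λ_1/λ_n ≤ λ_i/α_{k+1} ≤ 1`, and the factor
`1 - λ_i/α_{k+1}` relating `e_i^{k+2}` to `e_i^{k+1}` lies in `[0, 1 - λ_1/λ_n]`.
-/

open Finset

section WeightedMean

variable {ι : Type*} {s : Finset ι} {w x : ι → ℝ}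

lemma le_weighted_mean_of_sum_sub_mul_nonneg {c : ℝ} (hw : 0 < ∑ j ∈ s, w j)
    (h : 0 ≤ ∑ j ∈ s, (x j - c) * w j) :
    c ≤ (∑ j ∈ s, x j * w j) / ∑ j ∈ s, w j := by
  have hsplit : ∑ j ∈ s, (x j - c) * w j = ∑ j ∈ s, x j * w j - c * ∑ j ∈ s, w j := by
    rw [mul_sum, ← sum_sub_distrib]
    exact sum_congr rfl fun j _ => by ring
  rw [le_div_iff₀ hw]
  linarith

lemma weighted_mean_le {M : ℝ} (hw₀ : ∀ j ∈ s, 0 ≤ w j) (hw : 0 < ∑ j ∈ s, w j)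
    (hx : ∀ j ∈ s, x j ≤ M) :
    (∑ j ∈ s, x j * w j) / ∑ j ∈ s, w j ≤ M := by
  rw [div_le_iff₀ hw, mul_sum]
  exact sum_le_sum fun j hj => mul_le_mul_of_nonneg_right (hx j hj) (hw₀ j hj)

end WeightedMean

lemma abs_one_sub_div_mul_le {l α m L y : ℝ} (hm : 0 < m) (hml : m ≤ l) (hlα : l ≤ α)
    (hαL : α ≤ L) :
    |(1 - l / α) * y| ≤ (1 - m / L) * |y| := by
  have hl : 0 < l := hm.trans_le hml
  have hα : 0 < α := hl.trans_le hlα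
  have hle_one : l / α ≤ 1 := (div_le_one hα).mpr hlα
  have hratio : m / L ≤ l / α := div_le_div₀ hl.le hml hα hαL
  rw [abs_mul, abs_of_nonneg (sub_nonneg.mpr hle_one)]
  exact mul_le_mul_of_nonneg_right (by linarith) (abs_nonneg y)

section RBBWeight

variable {ι : Type*} {lam v : ι → ℝ} {t : ℝ}

def rbbWeight (lam : ι → ℝ) (t : ℝ) (v : ι → ℝ) (j : ι) : ℝ :=
  lam j ^ 2 * (1 + t * lam j ^ 2) * v j ^ 2

lemma rbbWeight_nonneg (ht : 0 ≤ t) (j : ι) : 0 ≤ rbbWeight lam t v j := by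
  unfold rbbWeight
  positivity

lemma sum_rbbWeight_pos [Fintype ι] (hlam : ∀ j, 0 < lam j) (ht : 0 ≤ t) (hv : v ≠ 0) :
    0 < ∑ j, rbbWeight lam t v j := by
  obtain ⟨j, hj⟩ : ∃ j, v j ≠ 0 := Function.ne_iff.mp hv
  refine sum_pos' (fun j _ => rbbWeight_nonneg ht j) ⟨j, mem_univ j, ?_⟩
  have := hlam j
  unfold rbbWeight
  positivity

end RBBWeight

theorem rbb_coordinate_shrinking_mode_general
    (n : ℕ) (lam : Fin (n + 1) → ℝ) (hpos : 0 < lam 0) (hmono : Monotone lam)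
    (T : ℝ)
    (e : ℕ → Fin (n + 1) → ℝ) (α τ : ℕ → ℝ)
    (hτ : ∀ k, 0 ≤ τ k ∧ τ k ≤ T)
    (he : ∀ k, e k ≠ 0)
    (hrec : ∀ k i, e (k + 1) i = (1 - lam i / α k) * e k i)
    (hα : ∀ k, α (k + 1) =
      (∑ i, lam i ^ 3 * (1 + τ k * lam i ^ 2) * e k i ^ 2) /
      (∑ i, lam i ^ 2 * (1 + τ k * lam i ^ 2) * e k i ^ 2)) :
    ∀ (k : ℕ) (i : Fin (n + 1)),
      0 ≤ (∑ j, (lam j - lam i) * e k j ^ 2 * lam j ^ 2 * (1 + τ k * lam j ^ 2)) →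
      |e (k + 2) i| ≤ (1 - lam 0 / lam (Fin.last n)) * |e (k + 1) i| := by
  intro k i hshrink
  have hlam : ∀ j, 0 < lam j := fun j => hpos.trans_le (hmono (Fin.zero_le j))
  set w := rbbWeight lam (τ k) (e k)
  have hw₀ : ∀ j ∈ univ, 0 ≤ w j := fun j _ => rbbWeight_nonneg (hτ k).1 j
  have hw : 0 < ∑ j, w j := sum_rbbWeight_pos hlam (hτ k).1 (he k)
  have hα_mean : α (k + 1) = (∑ j, lam j * w j) / ∑ j, w j := by
    rw [hα]
    congr 1
    exact sum_congr rfl fun j _ => by simp only [w, rbbWeight]; ring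
  have hshrink_w : 0 ≤ ∑ j, (lam j - lam i) * w j :=
    hshrink.trans_eq (sum_congr rfl fun j _ => by simp only [w, rbbWeight]; ring)
  have hα_ge : lam i ≤ α (k + 1) :=
    hα_mean ▸ le_weighted_mean_of_sum_sub_mul_nonneg hw hshrink_w
  have hα_le : α (k + 1) ≤ lam (Fin.last n) :=
    hα_mean ▸ weighted_mean_le hw₀ hw fun j _ => hmono (Fin.le_last j)
  rw [hrec (k + 1) i]
  exact abs_one_sub_div_mul_le hpos (hmono (Fin.zero_le i)) hα_ge hα_le

/-- In the coordinate model of the RBB iteration, if at step `k+1 ≥ 1`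
the component `i` is in shrinking mode, i.e.
`Σ_j (λ_j − λ_i)(e_j^k)²λ_j²(1+τ_kλ_j²) ≥ 0`, then
`|e_i^{k+2}| ≤ (1 − λ_1/λ_n)|e_i^{k+1}|`. -/
theorem rbb_coordinate_shrinking_mode
    (n : ℕ) (lam : Fin (n + 1) → ℝ) (hpos : 0 < lam 0) (hmono : Monotone lam)
    (T : ℝ) (hT : 0 ≤ T)
    (e : ℕ → Fin (n + 1) → ℝ) (α τ : ℕ → ℝ)
    (hτ : ∀ k, 0 ≤ τ k ∧ τ k ≤ T)
    (hα0 : lam 0 ≤ α 0 ∧ α 0 ≤ lam (Fin.last n))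
    (he : ∀ k, e k ≠ 0)
    (hrec : ∀ k i, e (k + 1) i = (1 - lam i / α k) * e k i)
    (hα : ∀ k, α (k + 1) =
      (∑ i, lam i ^ 3 * (1 + τ k * lam i ^ 2) * e k i ^ 2) /
      (∑ i, lam i ^ 2 * (1 + τ k * lam i ^ 2) * e k i ^ 2)) :
    ∀ (k : ℕ) (i : Fin (n + 1)),
      0 ≤ (∑ j, (lam j - lam i) * e k j ^ 2 * lam j ^ 2 * (1 + τ k * lam j ^ 2)) →
      |e (k + 2) i| ≤ (1 - lam 0 / lam (Fin.last n)) * |e (k + 1) i| :=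
  rbb_coordinate_shrinking_mode_general n lam hpos hmono T e α τ hτ he hrec hα
end
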